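/- arXiv:2509.22171 — 6 statements merged into one kernel-verified Lean document; each statement's English description precedes it below -/
import Mathlib

section
/- Let (θ, J, Adm) be a variational problem on π : E = ℝ × N → ℝ, and assume Adm is B(π)-linear, i.e. g·ξ ∈ Adm for every π-basic function g ∈ B(π) and every ξ ∈ Adm. Then a section γ of π over an open interval I is a solution of the variational problem (θ, J, Adm) if and only if: (1) γ*α = 0 for every α ∈ J, and (2) γ*(i_ξ dθ) = 0 for every ξ ∈ Adm. -/
/-! Along `γ`, Cartan's formula gives `γ*(ℒ_ξ θ) = γ*(i_ξ dθ) + d/dt (θ(ξ) ∘ γ)`, and the exact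
term integrates to zero over every compact `K` on whose frontier `ξ ∘ γ` vanishes. Hence the
action is stationary as soon as `γ*(i_ξ dθ) = 0`. Conversely, `B(π)`-linearity allows the variation
`g(t) ξ` for every test function `g ∈ C_c^∞(I)`, so `∫ g γ*(i_ξ dθ) = 0` for all such `g`, and the
continuous function `γ*(i_ξ dθ)` vanishes by the fundamental lemma of the calculus of variations. -/

open MeasureTheory Set Finset
open scoped ContDiff

noncomputable section

namespace VPGeom

variable {E : Type*} [NormedAddCommGroup E] [NormedSpace ℝ E]

/-- A smooth `k`-form in the function model: jointly smooth and, at each point,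
given by an alternating multilinear map on the tangent space. -/
def IsFormK (k : ℕ) (α : E → (Fin k → E) → ℝ) : Prop :=
  ContDiff ℝ ∞ (fun p : E × (Fin k → E) => α p.1 p.2) ∧
    ∀ x : E, ∃ m : AlternatingMap ℝ E ℝ (Fin k), ∀ v, α x v = m v

/-- A smooth `1`-form in the function model. -/
def IsForm1 (θ : E → E → ℝ) : Prop :=
  ContDiff ℝ ∞ (fun p : E × E => θ p.1 p.2) ∧ ∀ x : E, IsLinearMap ℝ (θ x)

/-- A smooth `2`-form in the function model. -/
def IsForm2 (Ω : E → E → E → ℝ) : Prop :=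
  ContDiff ℝ ∞ (fun p : E × E × E => Ω p.1 p.2.1 p.2.2) ∧
    ∀ x : E, ∃ m : AlternatingMap ℝ E ℝ (Fin 2), ∀ u v : E, Ω x u v = m ![u, v]

/-- Exterior derivative of a `1`-form on a vector space
(formula with constant extensions of the tangent vectors). -/
def extd1 (θ : E → E → ℝ) : E → E → E → ℝ := fun x u v =>
  fderiv ℝ (fun y => θ y v) x u - fderiv ℝ (fun y => θ y u) x v

/-- Exterior derivative of a `2`-form on a vector space. -/
def extd2 (Ω : E → E → E → ℝ) : E → E → E → E → ℝ := fun x u v w =>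
  fderiv ℝ (fun y => Ω y v w) x u - fderiv ℝ (fun y => Ω y u w) x v +
    fderiv ℝ (fun y => Ω y u v) x w

/-- Lie derivative of a `1`-form along a vector field (on a vector space). -/
def lie1 (ξ : E → E) (θ : E → E → ℝ) : E → E → ℝ := fun x v =>
  fderiv ℝ (fun y => θ y v) x (ξ x) + θ x (fderiv ℝ ξ x v)

/-- Wedge product of two `1`-forms. -/
def wedge11 (α β : E → E → ℝ) : E → E → E → ℝ := fun x u v =>
  α x u * β x v - α x v * β x u

/-- Wedge product of a `2`-form with a `1`-form. -/
def wedge21 (β : E → E → E → ℝ) (α : E → E → ℝ) : E → E → E → E → ℝ := fun x u v w =>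
  β x u v * α x w - β x u w * α x v + β x v w * α x u

/-- Wedge product of a `1`-form with a `2`-form. -/
def wedge12 (α : E → E → ℝ) (β : E → E → E → ℝ) : E → E → E → E → ℝ := fun x u v w =>
  α x u * β x v w - α x v * β x u w + α x w * β x u v

/-- Interior product of a vector field with a `2`-form. -/
def iota2 (ξ : E → E) (Ω : E → E → E → ℝ) : E → E → ℝ := fun x v => Ω x (ξ x) v

/-- `γ` is a smooth local section, over the open interval `I`, of the bundle over `ℝ`
whose projection ("time coordinate") is `T`. -/
structure IsSection (T : E → ℝ) (γ : ℝ → E) (I : Set ℝ) : Prop where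
  isOpen : IsOpen I
  ordConnected : I.OrdConnected
  nonempty : I.Nonempty
  smooth : ContDiffOn ℝ ∞ γ I
  proj : ∀ t ∈ I, T (γ t) = t

/-- Membership in the `C^∞(E)`-ideal generated by a set of functions. -/
def InIdeal (I₀ : Set (E → ℝ)) (h : E → ℝ) : Prop :=
  ∃ (m : ℕ) (f : Fin m → E → ℝ) (g : Fin m → E → ℝ),
    (∀ j, ContDiff ℝ ∞ (f j)) ∧ (∀ j, g j ∈ I₀) ∧ h = fun x => ∑ j, f j x * g j x

end VPGeom

namespace VPGeom

variable {N : Type*} [NormedAddCommGroup N] [NormedSpace ℝ N]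

/-- `π`-basic functions on `E = ℝ × N`: pullbacks of smooth functions on `ℝ`. -/
def IsBasic (g : ℝ × N → ℝ) : Prop :=
  ∃ gbase : ℝ → ℝ, ContDiff ℝ ∞ gbase ∧ ∀ x : ℝ × N, g x = gbase x.1

/-- `γ` (a section of `π : ℝ × N → ℝ` over the open interval `I`) is a solution of the
variational problem `(θ, J, Adm)`: it satisfies the constraints `γ*α = 0` for `α ∈ J`, and for
every compact `K ⊆ I` the variation of the action along any admissible variation vanishing at
`γ(∂K)` is zero. -/
def IsVPSolution (θ : (ℝ × N) → (ℝ × N) → ℝ)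
    (J : Set ((k : ℕ) × ((ℝ × N) → (Fin k → ℝ × N) → ℝ)))
    (Adm : Set ((ℝ × N) → ℝ × N)) (γ : ℝ → ℝ × N) (I : Set ℝ) : Prop :=
  (∀ α ∈ J, ∀ t ∈ I, α.2 (γ t) (fun _ => deriv γ t) = 0) ∧
  ∀ K : Set ℝ, IsCompact K → K ⊆ I →
    ∀ ξ ∈ Adm, (∀ t ∈ frontier K, ξ (γ t) = 0) →
      ∫ t in K, lie1 ξ θ (γ t) (deriv γ t) = 0

end VPGeom

section RealAnalysis

open Filter Asymptotics

variable {F : Type*} [NormedAddCommGroup F] [NormedSpace ℝ F]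

theorem countable_setOf_mem_not_accPt {α : Type*} [LinearOrder α] [TopologicalSpace α]
    [OrderTopology α] [SecondCountableTopology α] (s : Set α) :
    {x ∈ s | ¬AccPt x (𝓟 s)}.Countable := by
  refine (countable_setOfPred_isolated_right_within (s := s)).mono ?_
  rintro x ⟨hx, hacc⟩
  refine ⟨hx, ?_⟩
  rw [accPt_principal_iff_nhdsWithin, not_neBot] at hacc
  exact le_bot_iff.1 (hacc ▸ nhdsWithin_mono x
    (show s ∩ Ioi x ⊆ s \ {x} from fun y hy => ⟨hy.1, hy.2.ne'⟩))

theorem IsCompact.sInf_mem_frontier {α : Type*} [ConditionallyCompleteLinearOrder α]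
    [TopologicalSpace α] [OrderTopology α] [DenselyOrdered α] [NoMinOrder α] {K : Set α}
    (hK : IsCompact K) (hne : K.Nonempty) : sInf K ∈ frontier K := by
  refine ⟨subset_closure (hK.sInf_mem hne), fun hint => ?_⟩
  obtain ⟨y, hy, hyK⟩ :=
    Filter.Eventually.exists_lt (p := (· ∈ K)) (mem_interior_iff_mem_nhds.1 hint)
  exact (csInf_le hK.bddBelow hyK).not_gt hy

theorem IsCompact.sSup_mem_frontier {α : Type*} [ConditionallyCompleteLinearOrder α]
    [TopologicalSpace α] [OrderTopology α] [DenselyOrdered α] [NoMaxOrder α] {K : Set α}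
    (hK : IsCompact K) (hne : K.Nonempty) : sSup K ∈ frontier K := by
  refine ⟨subset_closure (hK.sSup_mem hne), fun hint => ?_⟩
  obtain ⟨y, hy, hyK⟩ :=
    Filter.Eventually.exists_gt (p := (· ∈ K)) (mem_interior_iff_mem_nhds.1 hint)
  exact (le_csSup hK.bddAbove hyK).not_gt hy

theorem Continuous.eq_zero_of_mem_frontier_tsupport {X M : Type*} [TopologicalSpace X]
    [TopologicalSpace M] [T1Space M] [Zero M] {f : X → M} (hf : Continuous f) {x : X}
    (hx : x ∈ frontier (tsupport f)) : f x = 0 :=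
  by_contra fun hfx => hx.2 (interior_maximal (subset_tsupport f) hf.isOpen_support hfx)

theorem HasDerivAt.eq_zero_of_accPt {f : ℝ → F} {f' : F} {s : Set ℝ} {x : ℝ}
    (hf : HasDerivAt f f' x) (hs : EqOn f 0 s) (hx : x ∈ s) (hacc : AccPt x (𝓟 s)) :
    f' = 0 :=
  hacc.uniqueDiffWithinAt.eq_deriv s hf.hasDerivWithinAt
    ((hasDerivWithinAt_const x s 0).congr hs (hs hx))

/-- The indicator is squeezed between `0` and `f`, both of which vanish to first order at `x`. -/
theorem HasDerivAt.indicator_of_eq_zero {f : ℝ → F} {x : ℝ} (s : Set ℝ)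
    (hf : HasDerivAt f 0 x) (hx : f x = 0) : HasDerivAt (s.indicator f) 0 x := by
  rw [hasDerivAt_iff_isLittleO] at hf ⊢
  refine IsBigO.trans_isLittleO (IsBigO.of_bound 1 (Eventually.of_forall fun y => ?_)) hf
  have hsx : s.indicator f x = 0 := by by_cases h : x ∈ s <;> simp [h, hx]
  simpa [hsx, hx] using norm_indicator_le_norm_self f y

/-- The indicator `K.indicator f` is continuous, and differentiable with derivative
`K.indicator f'` off the countably many isolated points of `frontier K`; integrate it over
`[inf K, sup K]`. -/
theorem IsCompact.setIntegral_deriv_eq_zero [CompleteSpace F] {f f' : ℝ → F} {I K : Set ℝ}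
    (hK : IsCompact K) (hI : I.OrdConnected) (hKI : K ⊆ I)
    (hf : ∀ t ∈ I, HasDerivAt f (f' t) t) (hf' : IntegrableOn f' K)
    (h0 : ∀ t ∈ frontier K, f t = 0) : ∫ t in K, f' t = 0 := by
  rcases K.eq_empty_or_nonempty with rfl | hne
  · simp
  set a := sInf K
  set b := sSup K
  have ha := hK.sInf_mem_frontier hne
  have hb := hK.sSup_mem_frontier hne
  have hKab : K ⊆ Icc a b := fun t ht => ⟨csInf_le hK.bddBelow ht, le_csSup hK.bddAbove ht⟩
  have hab : Icc a b ⊆ I := hI.out (hKI (hK.sInf_mem hne)) (hKI (hK.sSup_mem hne))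
  have hle : a ≤ b := csInf_le_csSup hne hK.bddBelow hK.bddAbove
  have hcont : ContinuousOn (K.indicator f) (Icc a b) := by
    refine (continuous_indicator h0 ?_).continuousOn
    rw [hK.isClosed.closure_eq]
    exact fun t ht => (hf t (hKI ht)).continuousAt.continuousWithinAt
  have hderiv : ∀ x ∈ Ioo a b \ {x ∈ frontier K | ¬AccPt x (𝓟 (frontier K))},
      HasDerivAt (K.indicator f) (K.indicator f' x) x := by
    rintro x ⟨hx, hxC⟩
    have hfx := hf x (hab (Ioo_subset_Icc_self hx))
    by_cases hfr : x ∈ frontier K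
    · have hf'x : f' x = 0 := hfx.eq_zero_of_accPt h0 hfr (by_contra fun h => hxC ⟨hfr, h⟩)
      rw [hf'x] at hfx
      rw [indicator_apply_eq_zero.2 fun _ => hf'x]
      exact hfx.indicator_of_eq_zero K (h0 x hfr)
    by_cases hxK : x ∈ K
    · have hint : x ∈ interior K := by_contra fun h => hfr ⟨subset_closure hxK, h⟩
      rw [indicator_of_mem hxK]
      exact hfx.congr_of_eventuallyEq <| eventuallyEq_of_mem (isOpen_interior.mem_nhds hint)
        fun y hy => indicator_of_mem (interior_subset hy) f
    · rw [indicator_of_notMem hxK]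
      exact (hasDerivAt_const x 0).congr_of_eventuallyEq <|
        eventuallyEq_of_mem (hK.isClosed.isOpen_compl.mem_nhds hxK)
          fun y hy => indicator_of_notMem hy f
  have hint : IntervalIntegrable (K.indicator f') volume a b :=
    ((integrable_indicator_iff hK.measurableSet).2 hf').intervalIntegrable
  calc ∫ t in K, f' t = ∫ t in a..b, K.indicator f' t := by
        rw [intervalIntegral.integral_of_le hle, ← integral_Icc_eq_integral_Ioc,
          setIntegral_indicator hK.measurableSet, inter_eq_right.2 hKab]
    _ = K.indicator f b - K.indicator f a :=
        integral_eq_of_hasDerivAt_off_countable_of_le _ _ hle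
          (countable_setOf_mem_not_accPt _) hcont hderiv hint
    _ = 0 := by
        rw [indicator_of_mem (hK.sSup_mem hne), indicator_of_mem (hK.sInf_mem hne), h0 b hb,
          h0 a ha, sub_zero]

end RealAnalysis

namespace VPGeom

section OneForms

open Function ContinuousLinearMap

variable {E : Type*} [NormedAddCommGroup E] [NormedSpace ℝ E] {θ : E → E → ℝ}

theorem IsForm1.differentiable_uncurry (hθ : IsForm1 θ) : Differentiable ℝ (uncurry θ) :=
  hθ.1.differentiable (by norm_num)

theorem IsForm1.fderiv_apply_left (hθ : IsForm1 θ) (x u v : E) :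
    fderiv ℝ (fun y => θ y v) x u = fderiv ℝ (uncurry θ) (x, v) (u, 0) := by
  have h : HasFDerivAt (fun y => θ y v) (fderiv ℝ (uncurry θ) (x, v) ∘L inl ℝ E E) x :=
    (hθ.differentiable_uncurry (x, v)).hasFDerivAt.comp (f := fun y => (y, v)) x
      (hasFDerivAt_prodMk_left x v)
  rw [h.fderiv]
  rfl

theorem IsForm1.fderiv_uncurry_apply_right (hθ : IsForm1 θ) (x v w : E) :
    fderiv ℝ (uncurry θ) (x, v) (0, w) = θ x w := by
  let L : E →L[ℝ] ℝ :=
    ⟨(hθ.2 x).mk' _, hθ.1.continuous.comp (continuous_const.prodMk continuous_id)⟩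
  have hL := ((hθ.differentiable_uncurry (x, v)).hasFDerivAt.comp (f := fun w => (x, w)) v
    (hasFDerivAt_prodMk_right x v)).unique L.hasFDerivAt
  exact congr($hL w)

theorem IsForm1.hasDerivAt_comp (hθ : IsForm1 θ) {x v : ℝ → E} {X V : E} {t : ℝ}
    (hx : HasDerivAt x X t) (hv : HasDerivAt v V t) :
    HasDerivAt (fun s => θ (x s) (v s))
      (fderiv ℝ (fun y => θ y (v t)) (x t) X + θ (x t) V) t := by
  refine ((hθ.differentiable_uncurry (x t, v t)).hasFDerivAt.comp_hasDerivAt t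
    (hx.prodMk hv)).congr_deriv ?_
  rw [hθ.fderiv_apply_left, ← hθ.fderiv_uncurry_apply_right (x t) (v t), ← map_add,
    Prod.mk_add_mk, add_zero, zero_add]

/-- Cartan's formula `ℒ_ξ θ = i_ξ dθ + d (θ ξ)`, pulled back along `γ`. -/
theorem IsForm1.hasDerivAt_apply_comp (hθ : IsForm1 θ) {ξ : E → E} (hξ : Differentiable ℝ ξ)
    {γ : ℝ → E} {γ' : E} {t : ℝ} (hγ : HasDerivAt γ γ' t) :
    HasDerivAt (fun s => θ (γ s) (ξ (γ s)))
      (lie1 ξ θ (γ t) γ' - extd1 θ (γ t) (ξ (γ t)) γ') t := by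
  refine (hθ.hasDerivAt_comp hγ ((hξ (γ t)).hasFDerivAt.comp_hasDerivAt t hγ)).congr_deriv ?_
  simp only [lie1, extd1, comp_apply]
  ring

theorem IsForm1.extd1_smul_left (hθ : IsForm1 θ) (c : ℝ) (x u v : E) :
    extd1 θ x (c • u) v = c * extd1 θ x u v := by
  have hθu : (fun y => θ y (c • u)) = c • fun y => θ y u :=
    funext fun y => (hθ.2 y).map_smul c u
  have hdiff : DifferentiableAt ℝ (fun y => θ y u) x :=
    (hθ.differentiable_uncurry.comp (differentiable_id.prodMk (differentiable_const u))) x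
  simp only [extd1, hθu, fderiv_const_smul hdiff, map_smul, smul_eq_mul, smul_apply]
  ring

variable {s : Set ℝ}

theorem IsForm1.continuousOn_fderiv_comp (hθ : IsForm1 θ) {x u v : ℝ → E}
    (hx : ContinuousOn x s) (hu : ContinuousOn u s) (hv : ContinuousOn v s) :
    ContinuousOn (fun t => fderiv ℝ (fun y => θ y (v t)) (x t) (u t)) s := by
  simp only [hθ.fderiv_apply_left]
  exact ((hθ.1.continuous_fderiv (by norm_num)).comp_continuousOn (hx.prodMk hv)).clm_apply
    (hu.prodMk continuousOn_const)

theorem IsForm1.continuousOn_comp (hθ : IsForm1 θ) {x v : ℝ → E}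
    (hx : ContinuousOn x s) (hv : ContinuousOn v s) :
    ContinuousOn (fun t => θ (x t) (v t)) s :=
  hθ.1.continuous.comp_continuousOn (hx.prodMk hv)

theorem IsForm1.continuousOn_lie1_comp (hθ : IsForm1 θ) {ξ : E → E} (hξ : ContDiff ℝ 1 ξ)
    {γ γ' : ℝ → E} (hγ : ContinuousOn γ s) (hγ' : ContinuousOn γ' s) :
    ContinuousOn (fun t => lie1 ξ θ (γ t) (γ' t)) s :=
  (hθ.continuousOn_fderiv_comp hγ (hξ.continuous.comp_continuousOn hγ) hγ').add
    (hθ.continuousOn_comp hγ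
      (((hξ.continuous_fderiv one_ne_zero).comp_continuousOn hγ).clm_apply hγ'))

theorem IsForm1.continuousOn_extd1_comp (hθ : IsForm1 θ) {ξ : E → E} (hξ : Continuous ξ)
    {γ γ' : ℝ → E} (hγ : ContinuousOn γ s) (hγ' : ContinuousOn γ' s) :
    ContinuousOn (fun t => extd1 θ (γ t) (ξ (γ t)) (γ' t)) s :=
  (hθ.continuousOn_fderiv_comp hγ (hξ.comp_continuousOn hγ) hγ').sub
    (hθ.continuousOn_fderiv_comp hγ hγ' (hξ.comp_continuousOn hγ))

theorem IsForm1.setIntegral_lie1_eq_setIntegral_extd1 (hθ : IsForm1 θ) {ξ : E → E}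
    (hξ : ContDiff ℝ 1 ξ) {γ : ℝ → E} {I K : Set ℝ} (hI : IsOpen I) (hIc : I.OrdConnected)
    (hγ : ContDiffOn ℝ 1 γ I) (hK : IsCompact K) (hKI : K ⊆ I)
    (hξγ : ∀ t ∈ frontier K, ξ (γ t) = 0) :
    ∫ t in K, lie1 ξ θ (γ t) (deriv γ t) = ∫ t in K, extd1 θ (γ t) (ξ (γ t)) (deriv γ t) := by
  have hγ' : ContinuousOn (deriv γ) I := hγ.continuousOn_deriv_of_isOpen hI le_rfl
  have hlie := hθ.continuousOn_lie1_comp hξ hγ.continuousOn hγ'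
  have hextd := hθ.continuousOn_extd1_comp hξ.continuous hγ.continuousOn hγ'
  have hint : ∀ {f : ℝ → ℝ}, ContinuousOn f I → IntegrableOn f K := fun hf =>
    (hf.mono hKI).integrableOn_compact hK
  rw [← sub_eq_zero, ← integral_sub (hint hlie) (hint hextd)]
  refine hK.setIntegral_deriv_eq_zero hIc hKI (fun t ht => hθ.hasDerivAt_apply_comp
    (hξ.differentiable one_ne_zero) ((hγ.differentiableOn one_ne_zero t ht).differentiableAt
      (hI.mem_nhds ht)).hasDerivAt) (hint (hlie.sub hextd)) fun t ht => ?_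
  simp only [hξγ t ht, (hθ.2 (γ t)).map_zero]

end OneForms

variable {N : Type*} [NormedAddCommGroup N] [NormedSpace ℝ N]

theorem IsVPSolution.extd1_eq_zero {θ : (ℝ × N) → (ℝ × N) → ℝ} (hθ : IsForm1 θ)
    {J : Set ((k : ℕ) × ((ℝ × N) → (Fin k → ℝ × N) → ℝ))} {Adm : Set ((ℝ × N) → ℝ × N)}
    (hAdm : ∀ ξ ∈ Adm, ContDiff ℝ ∞ ξ)
    (hBlin : ∀ g : (ℝ × N) → ℝ, IsBasic g → ∀ ξ ∈ Adm, (fun x => g x • ξ x) ∈ Adm)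
    {γ : ℝ → ℝ × N} {I : Set ℝ} (hγ : IsSection Prod.fst γ I)
    (hsol : IsVPSolution θ J Adm γ I) {ξ : (ℝ × N) → ℝ × N} (hξA : ξ ∈ Adm) :
    ∀ t ∈ I, extd1 θ (γ t) (ξ (γ t)) (deriv γ t) = 0 := by
  have hγ1 : ContDiffOn ℝ 1 γ I := hγ.smooth.of_le (by norm_num)
  have hcont := hθ.continuousOn_extd1_comp (hAdm ξ hξA).continuous hγ1.continuousOn
    (hγ1.continuousOn_deriv_of_isOpen hγ.isOpen le_rfl)
  refine Measure.eqOn_open_of_ae_eq (μ := volume) ?_ hγ.isOpen hcont continuousOn_const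
  rw [Filter.EventuallyEq, ae_restrict_iff' hγ.isOpen.measurableSet]
  refine hγ.isOpen.ae_eq_zero_of_integral_contDiff_smul_eq_zero
    (hcont.locallyIntegrableOn hγ.isOpen.measurableSet) fun g hg hgc hgI => ?_
  have hgξ : (fun x : ℝ × N => g x.1 • ξ x) ∈ Adm := hBlin _ ⟨g, hg, fun _ => rfl⟩ ξ hξA
  have hgξγ : ∀ t ∈ frontier (tsupport g), g (γ t).1 • ξ (γ t) = 0 := fun t ht => by
    rw [hγ.proj t (hgI (frontier_subset_iff_isClosed.2 (isClosed_tsupport g) ht)),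
      hg.continuous.eq_zero_of_mem_frontier_tsupport ht, zero_smul]
  have hvar := hsol.2 _ hgc hgI _ hgξ hgξγ
  rw [hθ.setIntegral_lie1_eq_setIntegral_extd1 (ξ := fun x : ℝ × N => g x.1 • ξ x)
    (((hg.comp contDiff_fst).smul (hAdm ξ hξA)).of_le (by norm_num)) hγ.isOpen hγ.ordConnected
    hγ1 hgc hgI hgξγ] at hvar
  calc ∫ t, g t • extd1 θ (γ t) (ξ (γ t)) (deriv γ t)
      = ∫ t in tsupport g, g t • extd1 θ (γ t) (ξ (γ t)) (deriv γ t) :=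
        (setIntegral_eq_integral_of_forall_compl_eq_zero fun t ht => by
          simp [image_eq_zero_of_notMem_tsupport ht]).symm
    _ = ∫ t in tsupport g, extd1 θ (γ t) (g (γ t).1 • ξ (γ t)) (deriv γ t) :=
        setIntegral_congr_fun hgc.measurableSet fun t ht => by
          rw [hθ.extd1_smul_left, hγ.proj t (hgI ht), smul_eq_mul]
    _ = 0 := hvar

theorem vp_solution_iff_geometric_general
    (θ : (ℝ × N) → (ℝ × N) → ℝ) (hθ : IsForm1 θ)
    (J : Set ((k : ℕ) × ((ℝ × N) → (Fin k → ℝ × N) → ℝ)))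
    (Adm : Set ((ℝ × N) → ℝ × N)) (hAdm : ∀ ξ ∈ Adm, ContDiff ℝ ∞ ξ)
    (hBlin : ∀ g : (ℝ × N) → ℝ, IsBasic g → ∀ ξ ∈ Adm, (fun x => g x • ξ x) ∈ Adm)
    (γ : ℝ → ℝ × N) (I : Set ℝ) (hγ : IsSection Prod.fst γ I) :
    IsVPSolution θ J Adm γ I ↔
      ((∀ α ∈ J, ∀ t ∈ I, α.2 (γ t) (fun _ => deriv γ t) = 0) ∧
        (∀ ξ ∈ Adm, ∀ t ∈ I, extd1 θ (γ t) (ξ (γ t)) (deriv γ t) = 0)) := by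
  refine ⟨fun hsol => ⟨hsol.1, fun ξ hξ => hsol.extd1_eq_zero hθ hAdm hBlin hγ hξ⟩,
    fun ⟨hcon, hgeo⟩ => ⟨hcon, fun K hK hKI ξ hξ hξγ => ?_⟩⟩
  rw [hθ.setIntegral_lie1_eq_setIntegral_extd1 ((hAdm ξ hξ).of_le (by norm_num)) hγ.isOpen
    hγ.ordConnected (hγ.smooth.of_le (by norm_num)) hK hKI hξγ]
  exact setIntegral_eq_zero_of_forall_eq_zero fun t ht => hgeo ξ hξ t (hKI ht)

/-- If `Adm` is `B(π)`-linear, then a section `γ` of `π` over an open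
interval `I` is a solution of the variational problem `(θ, J, Adm)` if and only if
`γ*α = 0` for all `α ∈ J` and `γ*(i_ξ dθ) = 0` for all `ξ ∈ Adm`. -/
theorem vp_solution_iff_geometric
    (θ : (ℝ × N) → (ℝ × N) → ℝ) (hθ : IsForm1 θ)
    (J : Set ((k : ℕ) × ((ℝ × N) → (Fin k → ℝ × N) → ℝ)))
    (hJ : ∀ α ∈ J, IsFormK α.1 α.2)
    (Adm : Set ((ℝ × N) → ℝ × N)) (hAdm : ∀ ξ ∈ Adm, ContDiff ℝ ∞ ξ)
    (hBlin : ∀ g : (ℝ × N) → ℝ, IsBasic g → ∀ ξ ∈ Adm, (fun x => g x • ξ x) ∈ Adm)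
    (γ : ℝ → ℝ × N) (I : Set ℝ) (hγ : IsSection Prod.fst γ I) :
    IsVPSolution θ J Adm γ I ↔
      ((∀ α ∈ J, ∀ t ∈ I, α.2 (γ t) (fun _ => deriv γ t) = 0) ∧
        (∀ ξ ∈ Adm, ∀ t ∈ I, extd1 θ (γ t) (ξ (γ t)) (deriv γ t) = 0)) :=
  vp_solution_iff_geometric_general θ hθ J Adm hAdm hBlin γ I hγ

end VPGeom
end
end

section
/- Let (Ω, J, Adm) be a geometric variational problem on π : E = ℝ × N → ℝ with J a set of smooth 1-forms. A vector field Z on E has the property that each of its integral curves is, after a translation of the curve parameter, a solution section of (Ω, J, Adm), if and only if: (1) i_Zα = 0 for all α ∈ J, (2) i_Z i_ξ Ω = 0 for all ξ ∈ Adm, and (3) i_Zτ = 1. -/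
open MeasureTheory Set Finset
open scoped ContDiff

noncomputable section

namespace VPGeom

variable {N : Type*} [NormedAddCommGroup N] [NormedSpace ℝ N]

/-- Solution sections of the geometric variational problem `(Ω, J, Adm)` on `π : ℝ × N → ℝ`,
where `J` is a set of `1`-forms. -/
def IsGVPSolution (Ω : (ℝ × N) → (ℝ × N) → (ℝ × N) → ℝ)
    (J : Set ((ℝ × N) → (ℝ × N) → ℝ)) (Adm : Set ((ℝ × N) → ℝ × N))
    (γ : ℝ → ℝ × N) (I : Set ℝ) : Prop :=
  IsSection Prod.fst γ I ∧
  (∀ α ∈ J, ∀ t ∈ I, α (γ t) (deriv γ t) = 0) ∧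
  (∀ ξ ∈ Adm, ∀ t ∈ I, Ω (γ t) (ξ (γ t)) (deriv γ t) = 0)

/-- `c` is an integral curve of the vector field `Z` on the open interval `I`. -/
def IsIntCurveOn (Z : (ℝ × N) → ℝ × N) (c : ℝ → ℝ × N) (I : Set ℝ) : Prop :=
  IsOpen I ∧ I.OrdConnected ∧ I.Nonempty ∧ ∀ t ∈ I, HasDerivAt c (Z (c t)) t

/-!
Along an integral curve `c` of `Z` the velocity is `Z ∘ c`, so the constraints that a solution
puts on its velocity are `i_Z α = 0` and `i_Z i_ξ Ω = 0` evaluated along `c`; since every point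
lies on some integral curve (Picard–Lindelöf), they must hold everywhere. A section has
`(c t).1 = t`, forcing `(Z x).1 = 1`. Conversely, if `(Z x).1 = 1` then `(c t).1 - t` is constant
along each integral curve, and shifting the parameter by that constant makes `c` a section.
-/

theorem contDiffOn_of_forall_hasDerivAt_comp {F : Type*} [NormedAddCommGroup F]
    [NormedSpace ℝ F] {Z : F → F} (hZ : ContDiff ℝ ∞ Z) {c : ℝ → F} {I : Set ℝ}
    (hI : IsOpen I) (hc : ∀ t ∈ I, HasDerivAt c (Z (c t)) t) : ContDiffOn ℝ ∞ c I := by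
  have hdiff : DifferentiableOn ℝ c I := fun t ht =>
    (hc t ht).differentiableAt.differentiableWithinAt
  have hderiv : EqOn (deriv c) (Z ∘ c) I := fun t ht => (hc t ht).deriv
  refine contDiffOn_infty.mpr fun n => ?_
  induction n with
  | zero => exact contDiffOn_zero.mpr hdiff.continuousOn
  | succ n ih =>
    rw [Nat.cast_add_one, contDiffOn_succ_iff_deriv_of_isOpen hI]
    exact ⟨hdiff, by simp, ((hZ.of_le (by exact_mod_cast le_top)).comp_contDiffOn ih).congr hderiv⟩

theorem hasDerivAt_fst {F G : Type*} [NormedAddCommGroup F] [NormedSpace ℝ F]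
    [NormedAddCommGroup G] [NormedSpace ℝ G] {γ : ℝ → F × G} {v : F × G} {s : ℝ}
    (hv : HasDerivAt γ v s) : HasDerivAt (fun t => (γ t).1) v.1 s :=
  (ContinuousLinearMap.fst ℝ F G).hasFDerivAt.comp_hasDerivAt s hv

section

variable {Z : (ℝ × N) → ℝ × N} {c : ℝ → ℝ × N} {I : Set ℝ}

theorem exists_isIntCurveOn_of_contDiffAt [CompleteSpace N] {x : ℝ × N}
    (hZ : ContDiffAt ℝ 1 Z x) :
    ∃ (c : ℝ → ℝ × N) (I : Set ℝ), IsIntCurveOn Z c I ∧ 0 ∈ I ∧ c 0 = x := by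
  obtain ⟨c, hc0, ε, hε, hc⟩ :=
    hZ.exists_forall_mem_closedBall_exists_eq_forall_mem_Ioo_hasDerivAt₀ 0
  have h0 : (0 : ℝ) ∈ Ioo (0 - ε) (0 + ε) := by simp [hε]
  exact ⟨c, _, ⟨isOpen_Ioo, ordConnected_Ioo, ⟨0, h0⟩, hc⟩, h0, hc0⟩

theorem IsIntCurveOn.comp_add_const (hc : IsIntCurveOn Z c I) (a : ℝ) :
    IsIntCurveOn Z (fun t => c (t + a)) {t | t + a ∈ I} := by
  obtain ⟨hI, hIc, ⟨t₀, ht₀⟩, hderiv⟩ := hc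
  exact ⟨hI.preimage (continuous_add_const a), hIc.preimage_mono (monotone_id.add_const a),
    ⟨t₀ - a, by simpa using ht₀⟩, fun t ht => (hderiv _ ht).comp_add_const t a⟩

theorem IsIntCurveOn.isGVPSolution_iff (hc : IsIntCurveOn Z c I)
    {Ω : (ℝ × N) → (ℝ × N) → (ℝ × N) → ℝ} {J : Set ((ℝ × N) → (ℝ × N) → ℝ)}
    {Adm : Set ((ℝ × N) → ℝ × N)} :
    IsGVPSolution Ω J Adm c I ↔ IsSection Prod.fst c I ∧
      (∀ α ∈ J, ∀ t ∈ I, α (c t) (Z (c t)) = 0) ∧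
      (∀ ξ ∈ Adm, ∀ t ∈ I, Ω (c t) (ξ (c t)) (Z (c t)) = 0) := by
  have hderiv : ∀ t ∈ I, deriv c t = Z (c t) := fun t ht => (hc.2.2.2 t ht).deriv
  simp +contextual only [IsGVPSolution, hderiv]

theorem IsSection.fst_of_hasDerivAt {γ : ℝ → ℝ × N} {v : ℝ × N} {s : ℝ}
    (hγ : IsSection Prod.fst γ I) (hs : s ∈ I) (hv : HasDerivAt γ v s) : v.1 = 1 := by
  have hfst : (fun t => t) =ᶠ[nhds s] fun t => (γ t).1 :=
    Filter.eventually_of_mem (hγ.isOpen.mem_nhds hs) fun t ht => (hγ.proj t ht).symm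
  exact ((hasDerivAt_fst hv).congr_of_eventuallyEq hfst).unique (hasDerivAt_id s)

theorem IsIntCurveOn.fst_sub_eq (hc : IsIntCurveOn Z c I) (hZ1 : ∀ x, (Z x).1 = 1) {s t : ℝ}
    (hs : s ∈ I) (ht : t ∈ I) : (c s).1 - s = (c t).1 - t := by
  have hderiv : ∀ t ∈ I, HasDerivAt (fun t => (c t).1 - t) 0 t := fun t ht =>
    ((hasDerivAt_fst (hc.2.2.2 t ht)).sub (hasDerivAt_id' t)).congr_deriv (by rw [hZ1, sub_self])
  exact hc.1.is_const_of_deriv_eq_zero hc.2.1.isPreconnected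
    (fun t ht => (hderiv t ht).differentiableAt.differentiableWithinAt)
    (fun t ht => (hderiv t ht).deriv) hs ht

theorem IsIntCurveOn.exists_isSection_comp_add_const (hZ : ContDiff ℝ ∞ Z)
    (hZ1 : ∀ x, (Z x).1 = 1) (hc : IsIntCurveOn Z c I) :
    ∃ a, IsSection Prod.fst (fun t => c (t + a)) {t | t + a ∈ I} := by
  obtain ⟨t₀, ht₀⟩ := hc.2.2.1
  set a := t₀ - (c t₀).1
  obtain ⟨hI, hIc, hne, hderiv⟩ := hc.comp_add_const a
  refine ⟨a, hI, hIc, hne, contDiffOn_of_forall_hasDerivAt_comp hZ hI hderiv, fun t ht => ?_⟩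
  have := hc.fst_sub_eq hZ1 ht ht₀
  simp only [a] at this ⊢
  linarith

end

theorem vectorField_solution_iff_general [CompleteSpace N]
    (Ω : (ℝ × N) → (ℝ × N) → (ℝ × N) → ℝ)
    (J : Set ((ℝ × N) → (ℝ × N) → ℝ))
    (Adm : Set ((ℝ × N) → ℝ × N))
    (Z : (ℝ × N) → ℝ × N) (hZ : ContDiff ℝ ∞ Z) :
    (∀ (c : ℝ → ℝ × N) (I : Set ℝ), IsIntCurveOn Z c I →
        ∃ a : ℝ, IsGVPSolution Ω J Adm (fun t => c (t + a)) {t | t + a ∈ I}) ↔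
      ((∀ α ∈ J, ∀ x, α x (Z x) = 0) ∧
        (∀ ξ ∈ Adm, ∀ x, Ω x (ξ x) (Z x) = 0) ∧
        (∀ x, (Z x).1 = 1)) := by
  constructor
  · intro H
    have key : ∀ x, (∀ α ∈ J, α x (Z x) = 0) ∧ (∀ ξ ∈ Adm, Ω x (ξ x) (Z x) = 0) ∧
        (Z x).1 = 1 := by
      intro x
      obtain ⟨c, I, hc, h0, hcx⟩ :=
        exists_isIntCurveOn_of_contDiffAt (hZ.contDiffAt.of_le (by exact_mod_cast le_top)) (x := x)
      obtain ⟨a, hsol⟩ := H c I hc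
      have hγ := hc.comp_add_const a
      obtain ⟨hsec, hJ, hAdm⟩ := hγ.isGVPSolution_iff.1 hsol
      have hmem : -a ∈ {t | t + a ∈ I} := by simpa using h0
      have hx : c (-a + a) = x := by rwa [neg_add_cancel]
      exact ⟨fun α hα => hx ▸ hJ α hα _ hmem, fun ξ hξ => hx ▸ hAdm ξ hξ _ hmem,
        hx ▸ hsec.fst_of_hasDerivAt hmem (hγ.2.2.2 _ hmem)⟩
    exact ⟨fun α hα x => (key x).1 α hα, fun ξ hξ x => (key x).2.1 ξ hξ, fun x => (key x).2.2⟩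
  · rintro ⟨hJZ, hAdmZ, hZ1⟩ c I hc
    obtain ⟨a, hsec⟩ := hc.exists_isSection_comp_add_const hZ hZ1
    exact ⟨a, (hc.comp_add_const a).isGVPSolution_iff.2
      ⟨hsec, fun α hα _ _ => hJZ α hα _, fun ξ hξ _ _ => hAdmZ ξ hξ _⟩⟩

/-- A vector field `Z` has the property that each of its integral curves is,
after a translation of the curve parameter, a solution section of the GVP `(Ω, J, Adm)` if and
only if `i_Z α = 0` for all `α ∈ J`, `i_Z i_ξ Ω = 0` for all `ξ ∈ Adm`, and `i_Z τ = 1`. -/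
theorem vectorField_solution_iff [CompleteSpace N]
    (Ω : (ℝ × N) → (ℝ × N) → (ℝ × N) → ℝ) (hΩ : IsForm2 Ω)
    (J : Set ((ℝ × N) → (ℝ × N) → ℝ)) (hJ : ∀ α ∈ J, IsForm1 α)
    (Adm : Set ((ℝ × N) → ℝ × N)) (hAdm : ∀ ξ ∈ Adm, ContDiff ℝ ∞ ξ)
    (Z : (ℝ × N) → ℝ × N) (hZ : ContDiff ℝ ∞ Z) :
    (∀ (c : ℝ → ℝ × N) (I : Set ℝ), IsIntCurveOn Z c I →
        ∃ a : ℝ, IsGVPSolution Ω J Adm (fun t => c (t + a)) {t | t + a ∈ I}) ↔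
      ((∀ α ∈ J, ∀ x, α x (Z x) = 0) ∧
        (∀ ξ ∈ Adm, ∀ x, Ω x (ξ x) (Z x) = 0) ∧
        (∀ x, (Z x).1 = 1)) :=
  vectorField_solution_iff_general Ω J Adm Z hZ

end VPGeom
end
end

section
/- Let E = ℝ × ℝ^{2n} × ℝ with coordinates (t, q^i, p_i, s), let H : E → ℝ be smooth, η = H dt + ds − p_i dq^i, η̂ = ds − p_i dq^i, σ_s = (∂H/∂s) dt, and Ω̄ = dη + σ_s ∧ η. Then a vector field Z on E satisfies i_ZΩ̄ = 0, i_Z dt = 1 and i_Zη = 0 if and only if Z satisfies the cocontact Hamiltonian equations: i_Z dη̂ = dH − (∂H/∂s) η̂ − (∂H/∂t) dt, i_Z η̂ = −H, and i_Z dt = 1. -/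
open MeasureTheory Set Finset
open scoped ContDiff

noncomputable section

namespace VPGeom

/-- `E = ℝ × T*ℝⁿ × ℝ` with coordinates `(t, qⁱ, pᵢ, s)`. -/
abbrev E5 (n : ℕ) := ℝ × (Fin n → ℝ) × (Fin n → ℝ) × ℝ

/-- `η̂ = ds - pᵢ dqⁱ`. -/
def etaHat (n : ℕ) : E5 n → E5 n → ℝ := fun x v =>
  v.2.2.2 - ∑ i, x.2.2.1 i * v.2.1 i

/-- `η = H dt + ds - pᵢ dqⁱ`. -/
def etaH (n : ℕ) (H : E5 n → ℝ) : E5 n → E5 n → ℝ := fun x v =>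
  H x * v.1 + etaHat n x v

/-- `σ_s = (∂H/∂s) dt`. -/
def sigmaS (n : ℕ) (H : E5 n → ℝ) : E5 n → E5 n → ℝ := fun x v =>
  fderiv ℝ H x ((0 : ℝ), (0 : Fin n → ℝ), (0 : Fin n → ℝ), (1 : ℝ)) * v.1

/-- `Ω̄ = dη + σ_s ∧ η`. -/
def OmegaBar5 (n : ℕ) (H : E5 n → ℝ) : E5 n → E5 n → E5 n → ℝ := fun x u v =>
  extd1 (etaH n H) x u v + wedge11 (sigmaS n H) (etaH n H) x u v

/-! Both systems contain `dt(Z) = 1` and `η̂(Z) = -H` (for the first, `η(Z) = H dt(Z) + η̂(Z)`).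
Under these, `i_Z Ω̄ = (i_Z dη̂ - dH + (∂H/∂s) η̂ + (∂H/∂t) dt) + (Z H - ∂H/∂t + H ∂H/∂s) dt`,
so the two systems agree once the energy dissipation law `Z H = ∂H/∂t - H ∂H/∂s` holds.
Each system implies it: `i_Z Ω̄ = 0` on evaluation at `∂ₜ`, the cocontact equations on
evaluation at `Z`, because `dη̂ = dqⁱ ∧ dpᵢ` is alternating and does not involve `dt`. -/

section

variable {E : Type*} [NormedAddCommGroup E] [NormedSpace ℝ E]

theorem extd1_add {θ₁ θ₂ : E → E → ℝ} {x : E}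
    (h₁ : ∀ v, DifferentiableAt ℝ (fun y => θ₁ y v) x)
    (h₂ : ∀ v, DifferentiableAt ℝ (fun y => θ₂ y v) x) (u v : E) :
    extd1 (fun y w => θ₁ y w + θ₂ y w) x u v = extd1 θ₁ x u v + extd1 θ₂ x u v := by
  simp only [extd1, fderiv_fun_add (h₁ _) (h₂ _), add_apply]
  ring

theorem extd1_mul_const {f : E → ℝ} {x : E} (hf : DifferentiableAt ℝ f x) (ℓ : E → ℝ)
    (u v : E) :
    extd1 (fun y w => f y * ℓ w) x u v =
      wedge11 (fun y w => fderiv ℝ f y w) (fun _ => ℓ) x u v := by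
  simp only [extd1, wedge11, fderiv_mul_const hf, smul_apply, smul_eq_mul]
  ring

end

section

variable {n : ℕ}

theorem differentiable_etaHat (v : E5 n) : Differentiable ℝ (fun y => etaHat n y v) := by
  unfold etaHat
  fun_prop

theorem fderiv_etaHat (v x u : E5 n) :
    fderiv ℝ (fun y => etaHat n y v) x u = -∑ i, u.2.2.1 i * v.2.1 i := by
  let p : Fin n → E5 n →L[ℝ] ℝ := fun i => .proj i ∘L .fst ℝ _ _ ∘L .snd ℝ _ _ ∘L .snd ℝ _ _
  have hp : ∀ i, HasFDerivAt (fun y : E5 n => y.2.2.1 i * v.2.1 i) (v.2.1 i • p i) x :=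
    fun i => (p i).hasFDerivAt.mul_const _
  unfold etaHat
  rw [((HasFDerivAt.fun_sum fun i _ => hp i).const_sub v.2.2.2).fderiv]
  simp [p, mul_comm]

theorem extd1_etaHat (x u v : E5 n) :
    extd1 (etaHat n) x u v = ∑ i, (v.2.2.1 i * u.2.1 i - u.2.2.1 i * v.2.1 i) := by
  simp only [extd1, fderiv_etaHat, Finset.sum_sub_distrib]
  ring

theorem extd1_etaH {H : E5 n → ℝ} {x : E5 n} (hH : DifferentiableAt ℝ H x) (u v : E5 n) :
    extd1 (etaH n H) x u v =
      fderiv ℝ H x u * v.1 - fderiv ℝ H x v * u.1 + extd1 (etaHat n) x u v := by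
  have hHt : ∀ w : E5 n, DifferentiableAt ℝ (fun y => H y * w.1) x := fun w => hH.mul_const _
  change extd1 (fun y w => H y * w.1 + etaHat n y w) x u v = _
  rw [extd1_add hHt (fun w => (differentiable_etaHat w).differentiableAt),
    extd1_mul_const hH, wedge11]

theorem omegaBar5_eq {H : E5 n → ℝ} {x z : E5 n} (hH : DifferentiableAt ℝ H x) (hz : z.1 = 1)
    (hzη : etaHat n x z = -H x) (u : E5 n) :
    OmegaBar5 n H x z u =
      (extd1 (etaHat n) x z u - (fderiv ℝ H x u - fderiv ℝ H x (0, 0, 0, 1) * etaHat n x u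
          - fderiv ℝ H x (1, 0, 0, 0) * u.1))
        + (fderiv ℝ H x z - fderiv ℝ H x (1, 0, 0, 0) + fderiv ℝ H x (0, 0, 0, 1) * H x) * u.1 := by
  rw [OmegaBar5, extd1_etaH hH, wedge11, sigmaS, sigmaS, etaH, etaH, hz, hzη]
  ring

end

/-- A vector field `Z` satisfies `i_Z Ω̄ = 0`, `i_Z dt = 1` and `i_Z η = 0`
iff it satisfies the cocontact Hamiltonian equations
`i_Z dη̂ = dH - (∂H/∂s) η̂ - (∂H/∂t) dt`, `i_Z η̂ = -H`, `i_Z dt = 1`. -/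
theorem cocontact_hamiltonian_equations (n : ℕ) (H : E5 n → ℝ) (hH : ContDiff ℝ ∞ H)
    (Z : E5 n → E5 n) :
    ((∀ x u, OmegaBar5 n H x (Z x) u = 0) ∧ (∀ x, (Z x).1 = 1) ∧
        (∀ x, etaH n H x (Z x) = 0)) ↔
      ((∀ x u, extd1 (etaHat n) x (Z x) u =
          fderiv ℝ H x u
            - fderiv ℝ H x ((0 : ℝ), (0 : Fin n → ℝ), (0 : Fin n → ℝ), (1 : ℝ)) * etaHat n x u
            - fderiv ℝ H x ((1 : ℝ), (0 : Fin n → ℝ), (0 : Fin n → ℝ), (0 : ℝ)) * u.1) ∧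
        (∀ x, etaHat n x (Z x) = -H x) ∧ (∀ x, (Z x).1 = 1)) := by
  have hdH : ∀ x, DifferentiableAt ℝ H x := fun x => (hH.differentiable (by simp)).differentiableAt
  constructor
  · rintro ⟨hΩ, hT, hη⟩
    have hηhat : ∀ x, etaHat n x (Z x) = -H x := fun x => by
      linarith [hη x, show etaH n H x (Z x) = H x + etaHat n x (Z x) by rw [etaH, hT x, mul_one]]
    have henergy : ∀ x, fderiv ℝ H x (Z x) - fderiv ℝ H x (1, 0, 0, 0)
        + fderiv ℝ H x (0, 0, 0, 1) * H x = 0 := fun x => by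
      simpa [omegaBar5_eq (hdH x) (hT x) (hηhat x), extd1_etaHat, etaHat] using hΩ x (1, 0, 0, 0)
    refine ⟨fun x u => ?_, hηhat, hT⟩
    have hΩu := hΩ x u
    rw [omegaBar5_eq (hdH x) (hT x) (hηhat x), henergy x, zero_mul, add_zero] at hΩu
    exact sub_eq_zero.mp hΩu
  · rintro ⟨hd, hηhat, hT⟩
    have henergy : ∀ x, fderiv ℝ H x (Z x) - fderiv ℝ H x (1, 0, 0, 0)
        + fderiv ℝ H x (0, 0, 0, 1) * H x = 0 := fun x => by
      have hZZ := hd x (Z x)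
      rw [extd1_etaHat, Finset.sum_eq_zero fun i _ => by ring, hηhat x, hT x] at hZZ
      linarith
    refine ⟨fun x u => ?_, hT, fun x => by rw [etaH, hT x, hηhat x]; ring⟩
    rw [omegaBar5_eq (hdH x) (hT x) (hηhat x), hd x u, henergy x]
    ring

end VPGeom
end
end

section
/- Let E = ℝ × ℝⁿ × ℝⁿ with coordinates (t, q^i, v^i), κ^i = dq^i − v^i dt, I₁^{vak} = ⟨κ^1,…,κ^n⟩, L : E → ℝ smooth, Θ_L = L dt + (∂L/∂v^i)κ^i, and Adm = {ξ ∈ 𝔛(E) : i_ξ dt = 0 and ℒ_ξκ^i ∈ I₁^{vak} for all i}. Then the geometric variational problem (dΘ_L, (∅, I₁^{vak}), ⟨Adm⟩^{B(π)}) is dynamically equivalent to the geometric variational problem (dΘ_L, (∅, I₁^{vak}), Γ(V(π))), where Γ(V(π)) is the set of all π-vertical vector fields on E. -/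
open MeasureTheory Set Finset
open scoped ContDiff

noncomputable section

namespace VPGeom

/-- `E = J¹ρ ≅ ℝ × ℝⁿ × ℝⁿ` with coordinates `(t, qⁱ, vⁱ)`. -/
abbrev E8 (n : ℕ) := ℝ × (Fin n → ℝ) × (Fin n → ℝ)

/-- The Cartan 1-forms `κⁱ = dqⁱ - vⁱ dt`. -/
def kap (n : ℕ) (i : Fin n) : E8 n → E8 n → ℝ := fun x w => w.2.1 i - x.2.2 i * w.1

/-- `∂L/∂vⁱ`. -/
def dLv (n : ℕ) (L : E8 n → ℝ) (i : Fin n) : E8 n → ℝ := fun x =>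
  fderiv ℝ L x ((0 : ℝ), (0 : Fin n → ℝ), Pi.single i 1)

/-- The Poincaré–Cartan 1-form `Θ_L = L dt + (∂L/∂vⁱ) κⁱ`. -/
def ThetaL (n : ℕ) (L : E8 n → ℝ) : E8 n → E8 n → ℝ := fun x w =>
  L x * w.1 + ∑ i, dLv n L i x * kap n i x w

end VPGeom
namespace VPGeom

/-- Membership in the `C^∞(E)`-module `I₁ᵛᵃᵏ = ⟨κ¹,…,κⁿ⟩` generated by the Cartan forms. -/
def InKapSpan (n : ℕ) (α : E8 n → E8 n → ℝ) : Prop :=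
  ∃ f : Fin n → E8 n → ℝ, (∀ j, ContDiff ℝ ∞ (f j)) ∧
    ∀ x w, α x w = ∑ j, f j x * kap n j x w

/-- The admissible variations for the vakonomically implemented holonomy constraints:
vertical smooth vector fields `ξ` with `ℒ_ξ κⁱ ∈ I₁ᵛᵃᵏ` for all `i`. -/
def AdmHol (n : ℕ) : Set (E8 n → E8 n) :=
  {ξ | ContDiff ℝ ∞ ξ ∧ (∀ x, (ξ x).1 = 0) ∧ ∀ i, InKapSpan n (lie1 ξ (kap n i))}

/-- `⟨A⟩^{B(π)}`: all finite `B(π)`-linear combinations of elements of `A`. -/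
def BSpan (n : ℕ) (A : Set (E8 n → E8 n)) : Set (E8 n → E8 n) :=
  {ξ | ∃ (m : ℕ) (g : Fin m → ℝ → ℝ) (ζ : Fin m → E8 n → E8 n),
    (∀ j, ContDiff ℝ ∞ (g j)) ∧ (∀ j, ζ j ∈ A) ∧ ξ = fun x => ∑ j, g j x.1 • ζ j x}

/-- The π-vertical smooth vector fields `Γ(V(π))` on `E = J¹ρ`. -/
def VertVF8 (n : ℕ) : Set (E8 n → E8 n) :=
  {ξ | ContDiff ℝ ∞ ξ ∧ ∀ x, (ξ x).1 = 0}

end VPGeom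

namespace VPGeom

/-- Solution sections of a GVP `(Ω, (∅, I₁ᵛᵃᵏ), A)` on `J¹ρ`. -/
def IsGVPSolHol (n : ℕ) (Ω : E8 n → E8 n → E8 n → ℝ) (A : Set (E8 n → E8 n))
    (γ : ℝ → E8 n) (I : Set ℝ) : Prop :=
  IsSection Prod.fst γ I ∧
  (∀ α : E8 n → E8 n → ℝ, InKapSpan n α → ∀ t ∈ I, α (γ t) (deriv γ t) = 0) ∧
  ∀ ξ ∈ A, ∀ t ∈ I, Ω (γ t) (ξ (γ t)) (deriv γ t) = 0

/-!
The variational condition of a GVP only sees the values of the variations along the section,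
so two sets of variations that lie in one another and take the same values at every point
define the same dynamics. `B(π)`-combinations of admissible fields are vertical. Conversely,
the prolongation `(0, η(t), η'(t))` of a vertical field `η(t) ∂_q` on `ℝ × ℝⁿ` satisfies
`ℒ κⁱ = 0`, hence is admissible, and taking `η` affine in `t` it can be made to pass
through any vertical vector `(0, b, d)` at any point.
-/

lemma fderiv_kap_left_apply (n : ℕ) (i : Fin n) (w x v : E8 n) :
    fderiv ℝ (fun y => kap n i y w) x v = -(w.1 * v.2.2 i) := by
  let vi : E8 n →L[ℝ] ℝ := (ContinuousLinearMap.proj i).comp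
    ((ContinuousLinearMap.snd ℝ _ _).comp (ContinuousLinearMap.snd ℝ _ _))
  have hkap : (fun y => kap n i y w) = fun y => w.2.1 i - w.1 * vi y := by
    funext y; simp only [kap, vi]; simp [mul_comm]
  rw [hkap, ((vi.hasFDerivAt.const_mul w.1).const_sub (w.2.1 i)).fderiv]
  simp [vi]

lemma lie1_kap_of_hasFDerivAt {n : ℕ} {ξ : E8 n → E8 n} {ξ' : E8 n →L[ℝ] E8 n} {x : E8 n}
    (h : HasFDerivAt ξ ξ' x) (i : Fin n) (w : E8 n) :
    lie1 ξ (kap n i) x w = (ξ' w).2.1 i - x.2.2 i * (ξ' w).1 - w.1 * (ξ x).2.2 i := by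
  rw [lie1, fderiv_kap_left_apply, h.fderiv, kap]
  ring

/-- The first jet prolongation of the π-vertical field `η(t) ∂_q` on `ℝ × ℝⁿ`. -/
def vertProlong (n : ℕ) (η : ℝ → Fin n → ℝ) : E8 n → E8 n := fun x => (0, η x.1, deriv η x.1)

lemma hasFDerivAt_vertProlong {n : ℕ} {η : ℝ → Fin n → ℝ} (hη : Differentiable ℝ η)
    (hη' : Differentiable ℝ (deriv η)) (x : E8 n) :
    HasFDerivAt (vertProlong n η)
      ((0 : E8 n →L[ℝ] ℝ).prod
        ((ContinuousLinearMap.fst ℝ ℝ _).smulRight (deriv η x.1) |>.prod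
          ((ContinuousLinearMap.fst ℝ ℝ _).smulRight (deriv (deriv η) x.1)))) x :=
  (hasFDerivAt_const _ x).prodMk
    (((hη x.1).hasDerivAt.hasFDerivAt.comp x hasFDerivAt_fst).prodMk
      ((hη' x.1).hasDerivAt.hasFDerivAt.comp x hasFDerivAt_fst))

lemma vertProlong_mem_admHol {n : ℕ} {η : ℝ → Fin n → ℝ} (hη : ContDiff ℝ ∞ η) :
    vertProlong n η ∈ AdmHol n := by
  have hη' : ContDiff ℝ ∞ (deriv η) := (contDiff_infty_iff_deriv.1 hη).2
  refine ⟨contDiff_const.prodMk ((hη.comp contDiff_fst).prodMk (hη'.comp contDiff_fst)),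
    fun _ => rfl, fun i => ⟨0, fun _ => contDiff_const, fun x w => ?_⟩⟩
  rw [lie1_kap_of_hasFDerivAt (hasFDerivAt_vertProlong (hη.differentiable (by simp))
    (hη'.differentiable (by simp)) x)]
  simp [vertProlong]

lemma exists_mem_admHol_apply_eq (n : ℕ) (x₀ u : E8 n) (hu : u.1 = 0) :
    ∃ ζ ∈ AdmHol n, ζ x₀ = u := by
  set η : ℝ → Fin n → ℝ := fun t => u.2.1 + (t - x₀.1) • u.2.2
  have hη : ContDiff ℝ ∞ η := by fun_prop
  have hderiv : deriv η = fun _ => u.2.2 := by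
    funext t; simp [η, deriv_smul_const]
  refine ⟨vertProlong n η, vertProlong_mem_admHol hη, ?_⟩
  ext <;> simp [vertProlong, hderiv, hu, η]

lemma subset_bSpan (n : ℕ) (A : Set (E8 n → E8 n)) : A ⊆ BSpan n A := fun ζ hζ =>
  ⟨1, fun _ _ => 1, fun _ => ζ, fun _ => contDiff_const, fun _ => hζ, by simp⟩

lemma admHol_subset_vertVF8 (n : ℕ) : AdmHol n ⊆ VertVF8 n := fun _ hξ => ⟨hξ.1, hξ.2.1⟩

lemma bSpan_subset_vertVF8 {n : ℕ} {A : Set (E8 n → E8 n)} (hA : A ⊆ VertVF8 n) :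
    BSpan n A ⊆ VertVF8 n := by
  rintro ξ ⟨m, g, ζ, hg, hζ, rfl⟩
  refine ⟨ContDiff.sum fun j _ => ((hg j).comp contDiff_fst).smul (hA (hζ j)).1, fun x => ?_⟩
  rw [Prod.fst_sum]
  exact Finset.sum_eq_zero fun j _ => by simp [(hA (hζ j)).2 x]

lemma isGVPSolHol_congr_variations {n : ℕ} {Ω : E8 n → E8 n → E8 n → ℝ}
    {A B : Set (E8 n → E8 n)} (hAB : A ⊆ B) (hBA : ∀ ξ ∈ B, ∀ x, ∃ ζ ∈ A, ζ x = ξ x)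
    (γ : ℝ → E8 n) (I : Set ℝ) :
    IsGVPSolHol n Ω A γ I ↔ IsGVPSolHol n Ω B γ I := by
  refine and_congr_right fun _ => and_congr_right fun _ =>
    ⟨fun hA ξ hξ t ht => ?_, fun hB ξ hξ => hB ξ (hAB hξ)⟩
  obtain ⟨ζ, hζ, hval⟩ := hBA ξ hξ (γ t)
  exact hval ▸ hA ζ hζ t ht

theorem admissible_vs_vertical_variations_general (n : ℕ) (L : E8 n → ℝ) :
    ∀ (γ : ℝ → E8 n) (I : Set ℝ),
      IsGVPSolHol n (extd1 (ThetaL n L)) (BSpan n (AdmHol n)) γ I ↔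
        IsGVPSolHol n (extd1 (ThetaL n L)) (VertVF8 n) γ I :=
  isGVPSolHol_congr_variations (bSpan_subset_vertVF8 (admHol_subset_vertVF8 n))
    fun ξ hξ x => (exists_mem_admHol_apply_eq n x (ξ x) (hξ.2 x)).imp
      fun _ hζ => ⟨subset_bSpan n _ hζ.1, hζ.2⟩

/-- The GVP `(dΘ_L, (∅, I₁ᵛᵃᵏ), ⟨Adm⟩^{B(π)})` is dynamically equivalent to
the GVP `(dΘ_L, (∅, I₁ᵛᵃᵏ), Γ(V(π)))`. -/
theorem admissible_vs_vertical_variations (n : ℕ) (L : E8 n → ℝ) (hL : ContDiff ℝ ∞ L) :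
    ∀ (γ : ℝ → E8 n) (I : Set ℝ),
      IsGVPSolHol n (extd1 (ThetaL n L)) (BSpan n (AdmHol n)) γ I ↔
        IsGVPSolHol n (extd1 (ThetaL n L)) (VertVF8 n) γ I :=
  admissible_vs_vertical_variations_general n L

end VPGeom
end
end

section
/- Let E = ℝ × ℝⁿ × ℝⁿ × ℝ^{k+r} with coordinates (t, q^i, v^i, s^α, u^a), κ^i = dq^i − v^i dt, I₁^{vak} = ⟨κ^i⟩, I₁^{nh} = ⟨η¹,…,η^k⟩, I₀ ⊆ C∞(E), and let L : E → ℝ be smooth with Θ_L = L dt + (∂L/∂v^i)κ^i. Assume the constraints are compatible: (1) I₁^{nh} has k generators η^α; (2) τ ∧ η¹ ∧ … ∧ η^k ∧ κ¹ ∧ dκ¹ ∧ … ∧ κⁿ ∧ dκⁿ vanishes nowhere; (3) i_{∂/∂v^i}η^α = 0 for all i, α. Choose vector fields R_α with i_{R_α}τ = 0 and i_{R_α}η^β = δ_α^β, and set σ_α = i_{R_α}dΘ_L and Ω̄ = dΘ_L + σ_α ∧ η^α. Then the geometric variational problem (dΘ_L, (I₀, I₁^{nh}, I₁^{vak}), ⟨Adm⟩^{B(π)})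 is dynamically equivalent to the geometric variational problem (Ω̄, (I₀, I₁^{nh}, I₁^{vak}), Γ(V(π))). -/
open MeasureTheory Set Finset
open scoped ContDiff

noncomputable section

namespace VPGeom

/-- `E = J¹ρ × N ≅ ℝ × ℝⁿ × ℝⁿ × ℝᵏ × ℝʳ` with coordinates `(t, qⁱ, vⁱ, sᵅ, uᵃ)`. -/
abbrev E12 (n k r : ℕ) := ℝ × (Fin n → ℝ) × (Fin n → ℝ) × (Fin k → ℝ) × (Fin r → ℝ)

/-- The Cartan 1-forms `κⁱ = dqⁱ - vⁱ dt` pulled back to `E`. -/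
def kap12 (n k r : ℕ) (i : Fin n) : E12 n k r → E12 n k r → ℝ := fun x w =>
  w.2.1 i - x.2.2.1 i * w.1

/-- `∂L/∂vⁱ`. -/
def dLv12 (n k r : ℕ) (L : E12 n k r → ℝ) (i : Fin n) : E12 n k r → ℝ := fun x =>
  fderiv ℝ L x ((0 : ℝ), (0 : Fin n → ℝ), Pi.single i 1, (0 : Fin k → ℝ), (0 : Fin r → ℝ))

/-- The Poincaré–Cartan 1-form `Θ_L = L dt + (∂L/∂vⁱ) κⁱ`. -/
def ThetaL12 (n k r : ℕ) (L : E12 n k r → ℝ) : E12 n k r → E12 n k r → ℝ := fun x w =>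
  L x * w.1 + ∑ i, dLv12 n k r L i x * kap12 n k r i x w

/-- The constraints `I₁ⁿʰ = ⟨η¹,…,ηᵏ⟩` and `I₁ᵛᵃᵏ = ⟨κ¹,…,κⁿ⟩` are compatible:
the `ηᵅ` number `k`; the wedge `τ ∧ (⋀ηᵅ) ∧ (⋀ κⁱ ∧ dκⁱ)` vanishes nowhere (expressed as the
pointwise linear independence of the covectors `τ, ηᵅ, κⁱ, dvⁱ`, which is the value of that
wedge condition since `dκⁱ = dt ∧ dvⁱ`); and `C ⊆ ⋂ ker ηᵅ`, i.e. `i_{∂/∂vⁱ} ηᵅ = 0`. -/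
def CompatibleConstraints (n k r : ℕ) (η : Fin k → E12 n k r → E12 n k r → ℝ) : Prop :=
  (∀ x : E12 n k r, LinearIndependent ℝ
    (Fin.cons (fun w : E12 n k r => w.1)
      (Fin.append (fun a : Fin k => η a x)
        (Fin.append (fun i : Fin n => kap12 n k r i x)
          (fun i : Fin n => fun w : E12 n k r => w.2.2.1 i))) :
      Fin (k + (n + n) + 1) → E12 n k r → ℝ)) ∧
  (∀ (i : Fin n) (a : Fin k) (x : E12 n k r),
    η a x ((0 : ℝ), (0 : Fin n → ℝ), Pi.single i 1, (0 : Fin k → ℝ), (0 : Fin r → ℝ)) = 0)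

/-- Membership in the `C^∞(E)`-module `⟨I₁ᵛᵃᵏ, I₁ⁿʰ⟩` generated by the `κⁱ` and the `ηᵅ`. -/
def InKapEtaSpan (n k r : ℕ) (η : Fin k → E12 n k r → E12 n k r → ℝ)
    (α : E12 n k r → E12 n k r → ℝ) : Prop :=
  ∃ (f : Fin n → E12 n k r → ℝ) (g : Fin k → E12 n k r → ℝ),
    (∀ j, ContDiff ℝ ∞ (f j)) ∧ (∀ a, ContDiff ℝ ∞ (g a)) ∧
    ∀ x w, α x w = ∑ j, f j x * kap12 n k r j x w + ∑ a, g a x * η a x w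

/-- The admissible variations: vertical smooth vector fields `ξ` with `i_ξ ηᵅ ∈ (I₀)` and
`ℒ_ξ κⁱ ∈ ⟨I₁ᵛᵃᵏ, I₁ⁿʰ⟩`. -/
def Adm12 (n k r : ℕ) (I₀ : Set (E12 n k r → ℝ))
    (η : Fin k → E12 n k r → E12 n k r → ℝ) : Set (E12 n k r → E12 n k r) :=
  {ξ | ContDiff ℝ ∞ ξ ∧ (∀ x, (ξ x).1 = 0) ∧
    (∀ a : Fin k, InIdeal I₀ fun x => η a x (ξ x)) ∧
    ∀ i : Fin n, InKapEtaSpan n k r η (lie1 ξ (kap12 n k r i))}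

/-- `⟨A⟩^{B(π)}`: all finite `B(π)`-linear combinations of elements of `A`. -/
def BSpan12 (n k r : ℕ) (A : Set (E12 n k r → E12 n k r)) : Set (E12 n k r → E12 n k r) :=
  {ξ | ∃ (m : ℕ) (g : Fin m → ℝ → ℝ) (ζ : Fin m → E12 n k r → E12 n k r),
    (∀ j, ContDiff ℝ ∞ (g j)) ∧ (∀ j, ζ j ∈ A) ∧ ξ = fun x => ∑ j, g j x.1 • ζ j x}

/-- The π-vertical smooth vector fields `Γ(V(π))`. -/
def Vert12 (n k r : ℕ) : Set (E12 n k r → E12 n k r) :=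
  {ξ | ContDiff ℝ ∞ ξ ∧ ∀ x, (ξ x).1 = 0}

end VPGeom

namespace VPGeom

/-- Solution sections of a GVP `(Ω, (I₀, I₁ⁿʰ, I₁ᵛᵃᵏ), A)`. -/
def IsGVPSol12 (n k r : ℕ) (Ω : E12 n k r → E12 n k r → E12 n k r → ℝ)
    (I₀ : Set (E12 n k r → ℝ)) (η : Fin k → E12 n k r → E12 n k r → ℝ)
    (A : Set (E12 n k r → E12 n k r)) (γ : ℝ → E12 n k r) (I : Set ℝ) : Prop :=
  IsSection Prod.fst γ I ∧
  (∀ f ∈ I₀, ∀ t ∈ I, f (γ t) = 0) ∧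
  (∀ a : Fin k, ∀ t ∈ I, η a (γ t) (deriv γ t) = 0) ∧
  (∀ i : Fin n, ∀ t ∈ I, kap12 n k r i (γ t) (deriv γ t) = 0) ∧
  ∀ ξ ∈ A, ∀ t ∈ I, Ω (γ t) (ξ (γ t)) (deriv γ t) = 0

/-! Along a solution `η^α(γ') = 0`, so `Ω̄(u, γ') = dΘ_L(u - η^α(u) R_α, γ')`, and
`u - η^α(u) R_α` is vertical and annihilated by every `η^α`. Up to a `∂/∂v`-component, such a
vector is the value at `γ t` of an admissible variation: keep its `q`-component constant and solve
`η^α = 0` smoothly for the `(s, u)`-components, which is possible because compatibility makes the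
`(s, u)`-block of the `η^α` of full rank everywhere (a smooth Gram-matrix pseudo-inverse does it).
The `∂/∂v`-component does not contribute, since `dΘ_L(∂/∂vⁱ, γ') = 0` once `κ(γ') = 0`. Hence the
`dΘ_L`-equations for admissible variations give the `Ω̄`-equations for all vertical fields.
Conversely, `B(π)`-combinations of admissible variations are vertical and, as `i_ξ η^α ∈ (I₀)`,
annihilated by the `η^α` along a solution, and on such vectors `Ω̄` and `dΘ_L` agree. -/

section Forms

variable {E : Type*} [NormedAddCommGroup E] [NormedSpace ℝ E]

theorem IsForm1.contDiff_apply {θ : E → E → ℝ} (hθ : IsForm1 θ) (v : E) :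
    ContDiff ℝ ∞ fun x => θ x v :=
  hθ.1.comp (contDiff_id.prodMk contDiff_const)

def IsForm1.toLinearMap {θ : E → E → ℝ} (hθ : IsForm1 θ) (x : E) : E →ₗ[ℝ] ℝ :=
  IsLinearMap.mk' (θ x) (hθ.2 x)

@[simp]
theorem IsForm1.toLinearMap_apply {θ : E → E → ℝ} (hθ : IsForm1 θ) (x v : E) :
    hθ.toLinearMap x v = θ x v := rfl

theorem IsForm1.isLinearMap_extd1_left {θ : E → E → ℝ} (hθ : IsForm1 θ) (x v : E) :
    IsLinearMap ℝ fun u => extd1 θ x u v := by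
  have hd u : DifferentiableAt ℝ (fun y => θ y u) x :=
    (hθ.contDiff_apply u).differentiable (by simp) x
  refine ⟨fun u u' => ?_, fun c u => ?_⟩
  · have : (fun y => θ y (u + u')) = fun y => θ y u + θ y u' :=
      funext fun y => (hθ.2 y).map_add u u'
    simp only [extd1, map_add, this, fderiv_fun_add (hd u) (hd u'), add_apply]
    ring
  · have : (fun y => θ y (c • u)) = fun y => c * θ y u :=
      funext fun y => (hθ.2 y).map_smul c u
    simp only [extd1, map_smul, this, fderiv_const_mul (hd u), smul_apply,
      smul_eq_mul]
    ring

theorem add_sum_wedge11_iota2_eq {k : ℕ} {Ω : E → E → E → ℝ} {η : Fin k → E → E → ℝ}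
    {R : Fin k → E → E} {x w : E} (hΩ : IsLinearMap ℝ fun u => Ω x u w)
    (hw : ∀ a, η a x w = 0) (u : E) :
    Ω x u w + ∑ a, wedge11 (iota2 (R a) Ω) (η a) x u w =
      Ω x (u - ∑ a, η a x u • R a x) w := by
  let Ωw := IsLinearMap.mk' _ hΩ
  change Ω x u w + _ = Ωw (u - ∑ a, η a x u • R a x)
  simp only [map_sub, map_sum, map_smul, wedge11, iota2, hw, smul_eq_mul]
  simp [Ωw, sub_eq_add_neg, mul_comm]

theorem apply_sub_sum_smul_eq_zero {k : ℕ} {η : Fin k → E → E → ℝ} {R : Fin k → E → E}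
    {x : E} (hη : ∀ a, IsLinearMap ℝ (η a x))
    (hR : ∀ a b, η b x (R a x) = if a = b then 1 else 0) (u : E) (b : Fin k) :
    η b x (u - ∑ a, η a x u • R a x) = 0 := by
  let ηb := IsLinearMap.mk' _ (hη b)
  change ηb (u - ∑ a, η a x u • R a x) = 0
  simp [ηb, map_sub, map_sum, map_smul, hR]

theorem InIdeal.apply_eq_zero {I₀ : Set (E → ℝ)} {h : E → ℝ} (hh : InIdeal I₀ h) {x : E}
    (hx : ∀ f ∈ I₀, f x = 0) : h x = 0 := by
  obtain ⟨m, f, g, -, hg, rfl⟩ := hh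
  simp [hx _ (hg _)]

end Forms

section MatrixFamilies

open Matrix

variable {m ι F : Type*} [Fintype m] [DecidableEq m] [Fintype ι] [NormedAddCommGroup F]
  {N : WithTop ℕ∞}

theorem _root_.Matrix.isUnit_mul_transpose_of_linearIndependent_row {A : Matrix m ι ℝ}
    (h : LinearIndependent ℝ A.row) : IsUnit (A * Aᵀ) := by
  rw [← mulVec_injective_iff_isUnit, ← coe_mulVecLin, ← LinearMap.ker_eq_bot]
  have hker := ker_mulVecLin_transpose_mul_self Aᵀ
  rw [transpose_transpose] at hker
  rw [hker, LinearMap.ker_eq_bot]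
  simpa [Function.Injective, mulVec_transpose] using vecMul_injective_iff.mpr h

section

variable {𝕜 : Type*} [NontriviallyNormedField 𝕜] [NormedSpace 𝕜 F]

theorem contDiff_det {A : F → Matrix m m 𝕜} (hA : ∀ i j, ContDiff 𝕜 N fun x => A x i j) :
    ContDiff 𝕜 N fun x => (A x).det := by
  simp only [det_apply, Units.smul_def, zsmul_eq_mul]
  fun_prop

theorem contDiff_adjugate_apply {A : F → Matrix m m 𝕜}
    (hA : ∀ i j, ContDiff 𝕜 N fun x => A x i j) (i j : m) :
    ContDiff 𝕜 N fun x => (A x).adjugate i j := by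
  simp only [adjugate_apply]
  refine contDiff_det fun i' j' => ?_
  by_cases h : i' = j
  · subst h; simp only [updateRow_self]; exact contDiff_const
  · simpa only [updateRow_ne h] using hA i' j'

theorem contDiff_inv_apply {A : F → Matrix m m 𝕜} (hA : ∀ i j, ContDiff 𝕜 N fun x => A x i j)
    (hdet : ∀ x, IsUnit (A x).det) (i j : m) : ContDiff 𝕜 N fun x => (A x)⁻¹ i j := by
  simp only [Matrix.inv_def, Ring.inverse_eq_inv', Matrix.smul_apply, smul_eq_mul]
  exact ((contDiff_det hA).inv fun x => (hdet x).ne_zero).mul (contDiff_adjugate_apply hA i j)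

end

variable [NormedSpace ℝ F]

theorem exists_contDiff_mulVec_eq {A : F → Matrix m ι ℝ} {b : F → m → ℝ}
    (hA : ∀ i j, ContDiff ℝ N fun x => A x i j) (hb : ∀ i, ContDiff ℝ N fun x => b x i)
    (hA_row : ∀ x, LinearIndependent ℝ (A x).row) (x₀ : F) {δ : ι → ℝ}
    (hδ : A x₀ *ᵥ δ = b x₀) :
    ∃ σ : F → ι → ℝ, ContDiff ℝ N σ ∧ (∀ x, A x *ᵥ σ x = b x) ∧ σ x₀ = δ := by
  have hunit x := (A x).isUnit_mul_transpose_of_linearIndependent_row (hA_row x)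
  have hgram : ∀ i j, ContDiff ℝ N fun x => (A x * (A x)ᵀ)⁻¹ i j :=
    contDiff_inv_apply (fun i j => by simp only [mul_apply, transpose_apply]; fun_prop)
      fun x => (isUnit_iff_isUnit_det _).mp (hunit x)
  refine ⟨fun x => δ + (A x)ᵀ *ᵥ ((A x * (A x)ᵀ)⁻¹ *ᵥ (b x - A x *ᵥ δ)), ?_, fun x => ?_, ?_⟩
  · refine contDiff_pi.mpr fun c => ?_
    simp only [Pi.add_apply, Pi.sub_apply, mulVec, dotProduct, transpose_apply]
    exact contDiff_const.add <| ContDiff.sum fun j _ => (hA j c).mul <| ContDiff.sum fun j' _ =>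
      (hgram j j').mul <| (hb j').sub <| ContDiff.sum fun l _ => (hA j' l).mul contDiff_const
  · rw [mulVec_add, mulVec_mulVec, mulVec_mulVec, mul_nonsing_inv _
      ((isUnit_iff_isUnit_det _).mp (hunit x)), one_mulVec, add_sub_cancel]
  · simp [hδ]

end MatrixFamilies

section Coordinates

variable {n k r : ℕ}

def qLin12 : (Fin n → ℝ) →ₗ[ℝ] E12 n k r :=
  LinearMap.inr ℝ ℝ _ ∘ₗ LinearMap.inl ℝ _ _

def vLin12 : (Fin n → ℝ) →ₗ[ℝ] E12 n k r :=
  LinearMap.inr ℝ ℝ _ ∘ₗ LinearMap.inr ℝ _ _ ∘ₗ LinearMap.inl ℝ _ _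

def suLin12 : (Fin k ⊕ Fin r → ℝ) →ₗ[ℝ] E12 n k r :=
  LinearMap.inr ℝ ℝ _ ∘ₗ LinearMap.inr ℝ _ _ ∘ₗ LinearMap.inr ℝ _ _ ∘ₗ
    (LinearEquiv.sumArrowLequivProdArrow (Fin k) (Fin r) ℝ ℝ).toLinearMap

@[simp]
theorem qLin12_apply (q : Fin n → ℝ) : (qLin12 q : E12 n k r) = (0, q, 0, 0, 0) := rfl

@[simp]
theorem vLin12_apply (e : Fin n → ℝ) : (vLin12 e : E12 n k r) = (0, 0, e, 0, 0) := rfl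

@[simp]
theorem suLin12_apply (σ : Fin k ⊕ Fin r → ℝ) :
    (suLin12 σ : E12 n k r) = (0, 0, 0, fun b => σ (.inl b), fun b => σ (.inr b)) := rfl

theorem E12.eq_add (w : E12 n k r) :
    w = w.1 • (1, 0, 0, 0, 0) + qLin12 w.2.1 + vLin12 w.2.2.1 +
      suLin12 (Sum.elim w.2.2.2.1 w.2.2.2.2) := by
  simp [Prod.mk_zero_zero]

theorem E12.eq_add_of_fst_eq_zero {u : E12 n k r} (hu : u.1 = 0) :
    u = qLin12 u.2.1 + vLin12 u.2.2.1 + suLin12 (Sum.elim u.2.2.2.1 u.2.2.2.2) := by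
  conv_lhs => rw [E12.eq_add u, hu, zero_smul, zero_add]

theorem E12.linearMap_apply (φ : E12 n k r →ₗ[ℝ] ℝ) (w : E12 n k r) :
    φ w = w.1 * φ (1, 0, 0, 0, 0) + ∑ i, w.2.1 i * φ (qLin12 (Pi.single i 1)) +
      φ (vLin12 w.2.2.1) + φ (suLin12 (Sum.elim w.2.2.2.1 w.2.2.2.2)) := by
  conv_lhs => rw [E12.eq_add w, pi_eq_sum_univ' w.2.1]
  simp only [map_add, map_smul, map_sum, smul_eq_mul]

end Coordinates

section Constraints

open Matrix

variable {n k r : ℕ} {η : Fin k → E12 n k r → E12 n k r → ℝ}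

theorem CompatibleConstraints.coeff_eq_zero (hc : CompatibleConstraints n k r η)
    {x : E12 n k r} {α : ℝ} {g : Fin k → ℝ} {β : Fin n → ℝ}
    (h : ∀ w, α * w.1 + ∑ a, g a * η a x w + ∑ i, β i * kap12 n k r i x w = 0) : g = 0 := by
  funext a
  have := Fintype.linearIndependent_iff.mp (hc.1 x) (Fin.cons α (Fin.append g (Fin.append β 0)))
    (funext fun w => by
      simpa only [Finset.sum_apply, Fin.sum_univ_succ, Fin.sum_univ_add, Fin.cons_zero,
        Fin.cons_succ, Fin.append_left, Fin.append_right, Pi.smul_apply, smul_eq_mul,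
        Pi.zero_apply, zero_mul, Finset.sum_const_zero, add_zero, add_assoc] using h w)
    (Fin.succ (Fin.castAdd (n + n) a))
  simpa using this

theorem CompatibleConstraints.apply_vLin12 (hη : ∀ a, IsForm1 (η a))
    (hc : CompatibleConstraints n k r η) (a : Fin k) (x : E12 n k r) (e : Fin n → ℝ) :
    η a x (vLin12 e) = 0 := by
  rw [← (hη a).toLinearMap_apply, pi_eq_sum_univ' e]
  simp only [map_sum, map_smul, smul_eq_mul]
  exact Finset.sum_eq_zero fun i _ => by simp [hc.2 i a x]

def etaMatrix12 (η : Fin k → E12 n k r → E12 n k r → ℝ) (x : E12 n k r) :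
    Matrix (Fin k) (Fin k ⊕ Fin r) ℝ :=
  Matrix.of fun a c => η a x (suLin12 (Pi.single c 1))

theorem etaMatrix12_mulVec (hη : ∀ a, IsForm1 (η a)) (x : E12 n k r)
    (σ : Fin k ⊕ Fin r → ℝ) : etaMatrix12 η x *ᵥ σ = fun a => η a x (suLin12 σ) := by
  funext a
  conv_rhs => rw [← (hη a).toLinearMap_apply, pi_eq_sum_univ' σ]
  simp only [map_sum, map_smul, smul_eq_mul, mulVec, dotProduct, etaMatrix12, of_apply,
    IsForm1.toLinearMap_apply, mul_comm]

theorem CompatibleConstraints.linearIndependent_row_etaMatrix12 (hη : ∀ a, IsForm1 (η a))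
    (hc : CompatibleConstraints n k r η) (x : E12 n k r) :
    LinearIndependent ℝ (etaMatrix12 η x).row := by
  -- A combination `φ = g • η` killing `∂/∂v`, `∂/∂s`, `∂/∂u` is a combination of `dt` and the
  -- `κⁱ`, so compatibility forces `g = 0`.
  rw [Fintype.linearIndependent_iff]
  intro g hg
  let φ : E12 n k r →ₗ[ℝ] ℝ := ∑ a, g a • (hη a).toLinearMap x
  have hφ w : ∑ a, g a * η a x w = φ w := by simp [φ]
  have hsu σ : φ (suLin12 σ) = 0 := by
    have hg' : g ᵥ* etaMatrix12 η x = 0 := by rwa [vecMul_eq_sum]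
    calc φ (suLin12 σ) = g ⬝ᵥ (etaMatrix12 η x *ᵥ σ) := by
          rw [etaMatrix12_mulVec hη, ← hφ]; rfl
      _ = 0 := by rw [dotProduct_mulVec, hg', zero_dotProduct]
  have hv e : φ (vLin12 e) = 0 := by
    simp only [← hφ, hc.apply_vLin12 hη, mul_zero, Finset.sum_const_zero]
  let φq i := φ (qLin12 (Pi.single i 1))
  refine congrFun (hc.coeff_eq_zero (x := x) (g := g) (β := fun i => -φq i)
    (α := -(φ (1, 0, 0, 0, 0) + ∑ i, x.2.2.1 i * φq i)) fun w => ?_)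
  rw [hφ, E12.linearMap_apply φ w, hv, hsu]
  simp only [kap12, neg_mul, mul_sub, Finset.sum_sub_distrib, Finset.sum_neg_distrib, add_mul,
    Finset.sum_mul]
  have e₁ : ∑ i, x.2.2.1 i * φq i * w.1 = ∑ i, φq i * (x.2.2.1 i * w.1) :=
    Finset.sum_congr rfl fun i _ => by ring
  have e₂ : ∑ i, w.2.1 i * φq i = ∑ i, φq i * w.2.1 i :=
    Finset.sum_congr rfl fun i _ => by ring
  linarith

end Constraints

section Variations

variable {n k r : ℕ}

def vCoord12 (i : Fin n) : E12 n k r →L[ℝ] ℝ :=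
  ContinuousLinearMap.proj i ∘L ContinuousLinearMap.fst ℝ _ _ ∘L
    ContinuousLinearMap.snd ℝ _ _ ∘L ContinuousLinearMap.snd ℝ _ _

@[simp]
theorem vCoord12_apply (i : Fin n) (y : E12 n k r) : vCoord12 i y = y.2.2.1 i := rfl

theorem hasFDerivAt_kap12 (i : Fin n) (x w : E12 n k r) :
    HasFDerivAt (fun y => kap12 n k r i y w) (-w.1 • vCoord12 i) x := by
  have h : (fun y => kap12 n k r i y w) = fun y => w.2.1 i + (-w.1 • vCoord12 i) y := by
    funext y; simp [kap12]; ring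
  rw [h]
  exact ((vCoord12 i).hasFDerivAt.const_smul (-w.1)).const_add _

theorem fderiv_kap12_apply (i : Fin n) (x w e : E12 n k r) :
    fderiv ℝ (fun y => kap12 n k r i y w) x e = -(w.1 * e.2.2.1 i) := by
  simp [(hasFDerivAt_kap12 i x w).fderiv]

theorem lie1_kap12_eq_zero {q : Fin n → ℝ} {σ : E12 n k r → Fin k ⊕ Fin r → ℝ} {x : E12 n k r}
    (hσ : DifferentiableAt ℝ σ x) (i : Fin n) (w : E12 n k r) :
    lie1 (fun y => qLin12 q + suLin12 (σ y)) (kap12 n k r i) x w = 0 := by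
  have hζ : HasFDerivAt (fun y => qLin12 q + suLin12 (σ y))
      ((LinearMap.toContinuousLinearMap suLin12).comp (fderiv ℝ σ x)) x :=
    ((LinearMap.toContinuousLinearMap suLin12).hasFDerivAt.comp x hσ.hasFDerivAt).const_add _
  rw [lie1, fderiv_kap12_apply, hζ.fderiv]
  simp [kap12]

theorem mem_adm12 {η : Fin k → E12 n k r → E12 n k r → ℝ} (I₀ : Set (E12 n k r → ℝ))
    {q : Fin n → ℝ} {σ : E12 n k r → Fin k ⊕ Fin r → ℝ} (hσ : ContDiff ℝ ∞ σ)
    (hησ : ∀ a y, η a y (qLin12 q + suLin12 (σ y)) = 0) :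
    (fun y => qLin12 q + suLin12 (σ y)) ∈ Adm12 n k r I₀ η := by
  refine ⟨contDiff_const.add ((LinearMap.toContinuousLinearMap suLin12).contDiff.comp hσ),
    fun y => by simp, fun a => ⟨0, Fin.elim0, Fin.elim0, fun j => j.elim0, fun j => j.elim0, ?_⟩,
    fun i => ⟨0, 0, fun _ => contDiff_const, fun _ => contDiff_const, fun x w => ?_⟩⟩
  · funext y
    rw [hησ]
    simp
  · rw [lie1_kap12_eq_zero (hσ.differentiable (by simp) x)]
    simp

theorem subset_bSpan12 (A : Set (E12 n k r → E12 n k r)) : A ⊆ BSpan12 n k r A := fun ζ hζ =>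
  ⟨1, fun _ _ => 1, fun _ => ζ, fun _ => contDiff_const, fun _ => hζ, by simp⟩

theorem bSpan12_subset_vert12 {A : Set (E12 n k r → E12 n k r)} (hA : A ⊆ Vert12 n k r) :
    BSpan12 n k r A ⊆ Vert12 n k r := by
  rintro _ ⟨m, g, ζ, hg, hζ, rfl⟩
  refine ⟨ContDiff.sum fun j _ => ((hg j).comp contDiff_fst).smul (hA (hζ j)).1, fun x => ?_⟩
  simp [Prod.fst_sum, fun j => (hA (hζ j)).2 x]

theorem adm12_subset_vert12 (I₀ : Set (E12 n k r → ℝ))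
    (η : Fin k → E12 n k r → E12 n k r → ℝ) : Adm12 n k r I₀ η ⊆ Vert12 n k r :=
  fun _ hξ => ⟨hξ.1, hξ.2.1⟩

theorem apply_eq_zero_of_mem_bSpan12_adm12 {I₀ : Set (E12 n k r → ℝ)}
    {η : Fin k → E12 n k r → E12 n k r → ℝ} (hη : ∀ a, IsForm1 (η a))
    {ξ : E12 n k r → E12 n k r} (hξ : ξ ∈ BSpan12 n k r (Adm12 n k r I₀ η)) {x : E12 n k r}
    (hx : ∀ f ∈ I₀, f x = 0) (a : Fin k) : η a x (ξ x) = 0 := by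
  obtain ⟨m, g, ζ, -, hζ, rfl⟩ := hξ
  rw [← (hη a).toLinearMap_apply]
  simp [map_sum, map_smul, fun j => ((hζ j).2.2.1 a).apply_eq_zero hx]

end Variations

section Admissible

open Matrix

variable {n k r : ℕ} {η : Fin k → E12 n k r → E12 n k r → ℝ}

theorem CompatibleConstraints.exists_mem_adm12_add_vLin12 (hη : ∀ a, IsForm1 (η a))
    (hc : CompatibleConstraints n k r η) (I₀ : Set (E12 n k r → ℝ)) {x₀ u : E12 n k r}
    (hu : u.1 = 0) (hηu : ∀ a, η a x₀ u = 0) :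
    ∃ ζ ∈ Adm12 n k r I₀ η, ζ x₀ + vLin12 u.2.2.1 = u := by
  have hsplit a y (q : Fin n → ℝ) (σ : Fin k ⊕ Fin r → ℝ) :
      η a y (qLin12 q + suLin12 σ) = η a y (qLin12 q) + (etaMatrix12 η y *ᵥ σ) a := by
    rw [((hη a).2 y).map_add, etaMatrix12_mulVec hη]
  obtain ⟨σ, hσ, hAσ, hσ₀⟩ := exists_contDiff_mulVec_eq (A := etaMatrix12 η)
    (b := fun y a => -η a y (qLin12 u.2.1)) (fun a c => (hη a).contDiff_apply _)
    (fun a => ((hη a).contDiff_apply _).neg) (hc.linearIndependent_row_etaMatrix12 hη) x₀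
    (δ := Sum.elim u.2.2.2.1 u.2.2.2.2) <| funext fun a => by
      have h := hηu a
      rw [E12.eq_add_of_fst_eq_zero hu, add_right_comm, ((hη a).2 x₀).map_add,
        hc.apply_vLin12 hη, add_zero, hsplit] at h
      linarith
  refine ⟨_, mem_adm12 I₀ (q := u.2.1) hσ fun a y => ?_, ?_⟩
  · rw [hsplit, hAσ]
    simp
  · rw [hσ₀, add_right_comm, ← E12.eq_add_of_fst_eq_zero hu]

end Admissible

section PoincareCartan

variable {n k r : ℕ} {L : E12 n k r → ℝ}

theorem contDiff_dLv12 (hL : ContDiff ℝ ∞ L) (i : Fin n) : ContDiff ℝ ∞ (dLv12 n k r L i) :=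
  (hL.fderiv_right (m := ∞) le_rfl).clm_apply contDiff_const

theorem fderiv_apply_vLin12 (L : E12 n k r → ℝ) (x : E12 n k r) (e : Fin n → ℝ) :
    fderiv ℝ L x (vLin12 e) = ∑ i, e i * dLv12 n k r L i x := by
  conv_lhs => rw [pi_eq_sum_univ' e]
  simp only [map_sum, map_smul, smul_eq_mul]
  rfl

theorem isForm1_ThetaL12 (hL : ContDiff ℝ ∞ L) : IsForm1 (ThetaL12 n k r L) := by
  have hdLv := contDiff_dLv12 hL
  refine ⟨?_, fun x => ⟨fun u v => ?_, fun c u => ?_⟩⟩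
  · simp only [ThetaL12, kap12]
    fun_prop
  · simp only [ThetaL12, kap12, Prod.fst_add, Prod.snd_add, Pi.add_apply]
    rw [mul_add, add_add_add_comm, ← Finset.sum_add_distrib]
    congr 1
    exact Finset.sum_congr rfl fun i _ => by ring
  · simp only [ThetaL12, kap12, Prod.smul_fst, Prod.smul_snd, Pi.smul_apply, smul_eq_mul]
    rw [mul_add, Finset.mul_sum]
    congr 1
    · ring
    · exact Finset.sum_congr rfl fun i _ => by ring

theorem extd1_ThetaL12_vLin12_eq_zero (hL : ContDiff ℝ ∞ L) {x w : E12 n k r}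
    (hw : ∀ i, kap12 n k r i x w = 0) (e : Fin n → ℝ) :
    extd1 (ThetaL12 n k r L) x (vLin12 e) w = 0 := by
  -- `Θ_L(∂/∂v) = 0`, and the `∂/∂v`-derivative of `L dt` cancels that of `(∂L/∂vⁱ) κⁱ`.
  have hΘv : (fun y => ThetaL12 n k r L y (vLin12 e)) = fun _ => 0 := by
    funext y
    simp [ThetaL12, kap12]
  have hΘw : HasFDerivAt (fun y => ThetaL12 n k r L y w) (w.1 • fderiv ℝ L x +
      ∑ i, (dLv12 n k r L i x • (-w.1 • vCoord12 i) +
        kap12 n k r i x w • fderiv ℝ (dLv12 n k r L i) x)) x :=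
    ((hL.differentiable (by simp) x).hasFDerivAt.mul_const w.1).add
    (HasFDerivAt.fun_sum (u := Finset.univ) fun i _ =>
      ((contDiff_dLv12 hL i).differentiable (by simp) x).hasFDerivAt.mul
        (hasFDerivAt_kap12 i x w))
  rw [extd1, hΘv, fderiv_fun_const, hΘw.fderiv]
  simp only [add_apply, smul_apply, smul_eq_mul]
  rw [fderiv_apply_vLin12, Finset.mul_sum]
  simp only [FunLike.coe_sum, Finset.sum_apply, hw, zero_smul, add_zero, vCoord12_apply,
    vLin12_apply, smul_apply, smul_eq_mul, Pi.zero_apply, zero_apply, sub_zero,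
    ← Finset.sum_add_distrib]
  exact Finset.sum_eq_zero fun i _ => by ring

end PoincareCartan

theorem mixed_constraints_reduction_general (n k r : ℕ) (L : E12 n k r → ℝ)
    (hL : ContDiff ℝ ∞ L)
    (I₀ : Set (E12 n k r → ℝ))
    (η : Fin k → E12 n k r → E12 n k r → ℝ) (hη : ∀ a, IsForm1 (η a))
    (hcompat : CompatibleConstraints n k r η)
    (R : Fin k → E12 n k r → E12 n k r)
    (hRτ : ∀ a x, (R a x).1 = 0)
    (hRη : ∀ a b x, η b x (R a x) = if a = b then 1 else 0)
    (OmgBar : E12 n k r → E12 n k r → E12 n k r → ℝ)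
    (hOmgBar : ∀ x u v, OmgBar x u v = extd1 (ThetaL12 n k r L) x u v +
      ∑ a, wedge11 (iota2 (R a) (extd1 (ThetaL12 n k r L))) (η a) x u v) :
    ∀ (γ : ℝ → E12 n k r) (I : Set ℝ),
      IsGVPSol12 n k r (extd1 (ThetaL12 n k r L)) I₀ η
          (BSpan12 n k r (Adm12 n k r I₀ η)) γ I ↔
        IsGVPSol12 n k r OmgBar I₀ η (Vert12 n k r) γ I := by
  intro γ I
  have hlin x v := (isForm1_ThetaL12 hL).isLinearMap_extd1_left x v
  refine ⟨fun ⟨hsec, hI₀γ, hηγ, hκγ, hvar⟩ => ⟨hsec, hI₀γ, hηγ, hκγ, fun ξ hξ t ht => ?_⟩,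
    fun ⟨hsec, hI₀γ, hηγ, hκγ, hvar⟩ => ⟨hsec, hI₀γ, hηγ, hκγ, fun ξ hξ t ht => ?_⟩⟩
  · have hu : (ξ (γ t) - ∑ a, η a (γ t) (ξ (γ t)) • R a (γ t)).1 = 0 := by
      simp [Prod.fst_sum, hξ.2, hRτ]
    obtain ⟨ζ, hζ, hζu⟩ := hcompat.exists_mem_adm12_add_vLin12 hη I₀ hu
      (apply_sub_sum_smul_eq_zero (fun a => (hη a).2 _) (hRη · · _) _)
    rw [hOmgBar, add_sum_wedge11_iota2_eq (hlin _ _) (hηγ · t ht), ← hζu, (hlin _ _).map_add,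
      hvar ζ (subset_bSpan12 _ hζ) t ht, extd1_ThetaL12_vLin12_eq_zero hL (hκγ · t ht), add_zero]
  · have h := hvar ξ (bSpan12_subset_vert12 (adm12_subset_vert12 I₀ η) hξ) t ht
    rwa [hOmgBar, add_sum_wedge11_iota2_eq (hlin _ _) (hηγ · t ht),
      Finset.sum_eq_zero fun a _ => by
        rw [apply_eq_zero_of_mem_bSpan12_adm12 hη hξ (hI₀γ · · t ht), zero_smul],
      sub_zero] at h

/-- For compatible constraints, with `σ_α = i_{R_α} dΘ_L` and
`Ω̄ = dΘ_L + σ_α ∧ ηᵅ`, the GVP `(dΘ_L, (I₀, I₁ⁿʰ, I₁ᵛᵃᵏ), ⟨Adm⟩^{B(π)})` is dynamically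
equivalent to the GVP `(Ω̄, (I₀, I₁ⁿʰ, I₁ᵛᵃᵏ), Γ(V(π)))`. -/
theorem mixed_constraints_reduction (n k r : ℕ) (L : E12 n k r → ℝ)
    (hL : ContDiff ℝ ∞ L)
    (I₀ : Set (E12 n k r → ℝ)) (hI₀ : ∀ f ∈ I₀, ContDiff ℝ ∞ f)
    (η : Fin k → E12 n k r → E12 n k r → ℝ) (hη : ∀ a, IsForm1 (η a))
    (hcompat : CompatibleConstraints n k r η)
    (R : Fin k → E12 n k r → E12 n k r) (hR : ∀ a, ContDiff ℝ ∞ (R a))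
    (hRτ : ∀ a x, (R a x).1 = 0)
    (hRη : ∀ a b x, η b x (R a x) = if a = b then 1 else 0)
    (OmgBar : E12 n k r → E12 n k r → E12 n k r → ℝ)
    (hOmgBar : ∀ x u v, OmgBar x u v = extd1 (ThetaL12 n k r L) x u v +
      ∑ a, wedge11 (iota2 (R a) (extd1 (ThetaL12 n k r L))) (η a) x u v) :
    ∀ (γ : ℝ → E12 n k r) (I : Set ℝ),
      IsGVPSol12 n k r (extd1 (ThetaL12 n k r L)) I₀ η
          (BSpan12 n k r (Adm12 n k r I₀ η)) γ I ↔
        IsGVPSol12 n k r OmgBar I₀ η (Vert12 n k r) γ I :=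
  mixed_constraints_reduction_general n k r L hL I₀ η hη hcompat R hRτ hRη OmgBar hOmgBar

end VPGeom
end
end

section
/- Let E = ℝ × ℝⁿ × ℝⁿ with coordinates (t, q^i, v^i), κ^i = dq^i − v^i dt, I₁^{vak} = ⟨κ^i⟩, L : E → ℝ smooth, Θ_L = L dt + (∂L/∂v^i)κ^i. Let E' = E × ℝⁿ with additional coordinates p_i, π' : E' → E the projection, L' = L∘π', κ'^i = π'*(κ^i), and Ω_U = dL' ∧ dt + d(p_i κ'^i). Then the GVP (Ω_U, ∅, Γ(V(π∘π'))) is dynamically π'-equivalent to the GVP (dΘ_L, (∅, I₁^{vak}), Γ(V(π))): the map γ' ↦ π'∘γ' is injective on Sol(Ω_U, ∅, Γ(V(π∘π'))) and its image is exactly Sol(dΘ_L, (∅, I₁^{vak}), Γ(V(π))). -/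
open MeasureTheory Set Finset
open scoped ContDiff

noncomputable section

namespace VPGeom

/-- `E' = E × ℝⁿ` with additional momentum coordinates `pᵢ`. -/
abbrev E14 (n : ℕ) := E8 n × (Fin n → ℝ)

/-- The unified form `Ω_U = dL' ∧ dt + d(pᵢ κ'ⁱ)` on `E'`. -/
def OmegaU14 (n : ℕ) (L : E8 n → ℝ) : E14 n → E14 n → E14 n → ℝ := fun x u v =>
  wedge11 (fun y w => fderiv ℝ (fun z : E14 n => L z.1) y w) (fun _ w => w.1.1) x u v +
    extd1 (fun y w => ∑ i, y.2 i * kap n i y.1 w.1) x u v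

/-- Solution sections of the GVP `(Ω_U, ∅, Γ(V(π∘π')))` on `E'`. -/
def IsSolU14 (n : ℕ) (L : E8 n → ℝ) (γ' : ℝ → E14 n) (I : Set ℝ) : Prop :=
  IsSection (fun x => x.1.1) γ' I ∧
  ∀ ξ : E14 n → E14 n, ContDiff ℝ ∞ ξ → (∀ x, (ξ x).1.1 = 0) →
    ∀ t ∈ I, OmegaU14 n L (γ' t) (ξ (γ' t)) (deriv γ' t) = 0

/-- Solution sections of the GVP `(dΘ_L, (∅, I₁ᵛᵃᵏ), Γ(V(π)))` on `E`. -/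
def IsSolE14 (n : ℕ) (L : E8 n → ℝ) (γ : ℝ → E8 n) (I : Set ℝ) : Prop :=
  IsSection Prod.fst γ I ∧
  (∀ α : E8 n → E8 n → ℝ, InKapSpan n α → ∀ t ∈ I, α (γ t) (deriv γ t) = 0) ∧
  ∀ ξ ∈ VertVF8 n, ∀ t ∈ I, extd1 (ThetaL n L) (γ t) (ξ (γ t)) (deriv γ t) = 0

/-!
Contracting `Ω_U` along a section `γ'` with the constant vertical fields `∂/∂pᵢ`, `∂/∂vⁱ`,
`∂/∂qⁱ` shows that `γ'` solves the unified problem exactly when `κⁱ(γ̇) = 0`, `pᵢ = ∂L/∂vⁱ`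
and `ṗᵢ = ∂L/∂qⁱ`; constant fields suffice since the condition at `t` only sees the value of
the field at `γ' t`. In the same way the solutions of `(dΘ_L, I₁ᵛᵃᵏ)` are the holonomic
sections satisfying the Euler–Lagrange equations `d/dt (∂L/∂vⁱ) = ∂L/∂qⁱ`. The condition
`pᵢ = ∂L/∂vⁱ` says that a unified solution is the lift of its projection to the graph of
`x ↦ ∂L/∂v(x)`, which gives injectivity; along that lift `ṗᵢ = d/dt (∂L/∂vⁱ)`, which turns the
third condition into the Euler–Lagrange equations and back.
-/

section

variable {F : Type*} [NormedAddCommGroup F] [NormedSpace ℝ F] {T : F → ℝ} {γ : ℝ → F}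
  {I : Set ℝ} {t : ℝ}

theorem IsSection.hasDerivAt (hs : IsSection T γ I) (ht : t ∈ I) :
    HasDerivAt γ (deriv γ t) t :=
  ((hs.smooth.contDiffAt (hs.isOpen.mem_nhds ht)).differentiableAt (by simp)).hasDerivAt

theorem IsSection.map_deriv_eq_one {φ : F →L[ℝ] ℝ} (hs : IsSection φ γ I) (ht : t ∈ I) :
    φ (deriv γ t) = 1 := by
  have hid : (fun s => φ (γ s)) =ᶠ[nhds t] id :=
    Filter.eventually_of_mem (hs.isOpen.mem_nhds ht) hs.proj
  exact (φ.hasFDerivAt.comp_hasDerivAt t (hs.hasDerivAt ht)).unique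
    ((hasDerivAt_id t).congr_of_eventuallyEq hid)

variable {G : Type*} [NormedAddCommGroup G] [NormedSpace ℝ G]

theorem IsSection.map {φ : F → G} (hφ : ContDiff ℝ ∞ φ) {T' : G → ℝ} (hT : ∀ x, T' (φ x) = T x)
    (hs : IsSection T γ I) : IsSection T' (fun s => φ (γ s)) I where
  isOpen := hs.isOpen
  ordConnected := hs.ordConnected
  nonempty := hs.nonempty
  smooth := hφ.comp_contDiffOn hs.smooth
  proj t ht := (hT _).trans (hs.proj t ht)

theorem forall_dotProduct_add_eq_zero_iff {ι R : Type*} [Fintype ι] [CommSemiring R]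
    (a b c : ι → R) :
    (∀ x y z : ι → R, x ⬝ᵥ a + y ⬝ᵥ b + z ⬝ᵥ c = 0) ↔ a = 0 ∧ b = 0 ∧ c = 0 := by
  refine ⟨fun h => ⟨?_, ?_, ?_⟩, fun ⟨ha, hb, hc⟩ x y z => by simp [ha, hb, hc]⟩ <;>
    refine dotProduct_eq_zero _ fun v => ?_ <;> rw [dotProduct_comm]
  · simpa using h v 0 0
  · simpa using h 0 v 0
  · simpa using h 0 0 v

end

section

variable {n : ℕ}

def dLq (n : ℕ) (L : E8 n → ℝ) (i : Fin n) : E8 n → ℝ := fun x =>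
  fderiv ℝ L x ((0 : ℝ), Pi.single i 1, (0 : Fin n → ℝ))

theorem fderiv_apply_vertical (L : E8 n → ℝ) (x : E8 n) (q v : Fin n → ℝ) :
    fderiv ℝ L x (0, q, v) = q ⬝ᵥ (fun i => dLq n L i x) + v ⬝ᵥ (fun i => dLv n L i x) := by
  have hsplit : ((0 : ℝ), q, v) = ∑ i, (q i • ((0 : ℝ), Pi.single i 1, (0 : Fin n → ℝ)) +
      v i • ((0 : ℝ), (0 : Fin n → ℝ), Pi.single i 1)) := by
    ext <;> simp [Prod.fst_sum, Prod.snd_sum, Finset.sum_apply, Pi.single_apply]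
  simp only [hsplit, map_sum, map_add, map_smul, smul_eq_mul, Finset.sum_add_distrib]
  rfl

theorem contDiff_dLv {m k : WithTop ℕ∞} (hmk : m + 1 ≤ k) {L : E8 n → ℝ} (hL : ContDiff ℝ k L)
    (i : Fin n) : ContDiff ℝ m (dLv n L i) :=
  (hL.fderiv_right hmk).clm_apply contDiff_const

theorem fderiv_momentum_kap (a : E8 n) (y u : E14 n) :
    fderiv ℝ (fun z : E14 n => ∑ i, z.2 i * kap n i z.1 a) y u =
      ∑ i, (u.2 i * kap n i y.1 a - y.2 i * (u.1.2.2 i * a.1)) := by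
  have h := HasFDerivAt.fun_sum (u := Finset.univ) fun i _ =>
    ((hasFDerivAt_apply i y.2).comp y (hasFDerivAt_snd (𝕜 := ℝ) (p := y))).mul
      ((((hasFDerivAt_apply i y.1.2.2).comp y ((hasFDerivAt_snd (𝕜 := ℝ)).comp y
        ((hasFDerivAt_snd (𝕜 := ℝ)).comp y (hasFDerivAt_fst (p := y))))).mul_const a.1).const_sub
          (a.2.1 i))
  change HasFDerivAt (fun z : E14 n => ∑ i, z.2 i * kap n i z.1 a) _ y at h
  rw [h.fderiv, _root_.sum_apply]
  refine Finset.sum_congr rfl fun i _ => ?_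
  simp [kap]
  ring

theorem omegaU14_apply_of_vertical {L : E8 n → ℝ} {x u w : E14 n} (hL : DifferentiableAt ℝ L x.1)
    (hu : u.1.1 = 0) (hw : w.1.1 = 1) :
    OmegaU14 n L x u w = u.2 ⬝ᵥ (fun i => kap n i x.1 w.1) +
      u.1.2.2 ⬝ᵥ ((fun i => dLv n L i x.1) - x.2) +
        u.1.2.1 ⬝ᵥ ((fun i => dLq n L i x.1) - w.2) := by
  have hL' : HasFDerivAt (fun z : E14 n => L z.1)
      ((fderiv ℝ L x.1).comp (ContinuousLinearMap.fst ℝ (E8 n) (Fin n → ℝ))) x :=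
    hL.hasFDerivAt.comp x hasFDerivAt_fst
  obtain ⟨⟨u₀, q, v⟩, p⟩ := u
  subst hu
  simp only [OmegaU14, wedge11, extd1, fderiv_momentum_kap, hL'.fderiv,
    ContinuousLinearMap.comp_apply, ContinuousLinearMap.coe_fst', fderiv_apply_vertical]
  simp only [kap, hw, dotProduct, Pi.sub_apply, mul_one, mul_zero, sub_zero]
  rw [← sub_eq_zero]
  simp only [← Finset.sum_add_distrib, ← Finset.sum_sub_distrib]
  exact Finset.sum_eq_zero fun i _ => by ring

theorem fderiv_thetaL_apply {L : E8 n → ℝ} {x : E8 n} (hL : DifferentiableAt ℝ L x)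
    (hdLv : ∀ i, DifferentiableAt ℝ (dLv n L i) x) (a u : E8 n) :
    fderiv ℝ (fun y => ThetaL n L y a) x u = fderiv ℝ L x u * a.1 +
      ∑ i, (fderiv ℝ (dLv n L i) x u * kap n i x a - dLv n L i x * (u.2.2 i * a.1)) := by
  have h := (hL.hasFDerivAt.mul_const a.1).add (HasFDerivAt.fun_sum (u := Finset.univ)
    fun i _ => (hdLv i).hasFDerivAt.mul
      ((((hasFDerivAt_apply i x.2.2).comp x ((hasFDerivAt_snd (𝕜 := ℝ)).comp x
        (hasFDerivAt_snd (p := x)))).mul_const a.1).const_sub (a.2.1 i)))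
  change HasFDerivAt (fun y => ThetaL n L y a) _ x at h
  rw [h.fderiv, _root_.add_apply, _root_.sum_apply]
  congr 1
  · simp [mul_comm]
  · refine Finset.sum_congr rfl fun i _ => ?_
    simp [kap]
    ring

theorem extd1_thetaL_apply_of_vertical {L : E8 n → ℝ} {x u w : E8 n} (hL : DifferentiableAt ℝ L x)
    (hdLv : ∀ i, DifferentiableAt ℝ (dLv n L i) x) (hu : u.1 = 0) (hw : w.1 = 1) :
    extd1 (ThetaL n L) x u w = (fun i => fderiv ℝ (dLv n L i) x u) ⬝ᵥ (fun i => kap n i x w) +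
      u.2.1 ⬝ᵥ ((fun i => dLq n L i x) - fun i => fderiv ℝ (dLv n L i) x w) := by
  obtain ⟨u₀, q, v⟩ := u
  subst hu
  simp only [extd1, fderiv_thetaL_apply hL hdLv, fderiv_apply_vertical L]
  simp only [kap, hw, dotProduct, Pi.sub_apply, mul_one, mul_zero, sub_zero, zero_add]
  rw [← sub_eq_zero]
  simp only [← Finset.sum_add_distrib, ← Finset.sum_sub_distrib]
  exact Finset.sum_eq_zero fun i _ => by ring

theorem omegaU14_vertical_eq_zero_iff {L : E8 n → ℝ} {x w : E14 n}
    (hL : DifferentiableAt ℝ L x.1) (hw : w.1.1 = 1) :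
    (∀ u : E14 n, u.1.1 = 0 → OmegaU14 n L x u w = 0) ↔
      (fun i => kap n i x.1 w.1) = 0 ∧ x.2 = (fun i => dLv n L i x.1) ∧
        w.2 = fun i => dLq n L i x.1 := by
  calc (∀ u : E14 n, u.1.1 = 0 → OmegaU14 n L x u w = 0)
      ↔ ∀ p v q : Fin n → ℝ, p ⬝ᵥ (fun i => kap n i x.1 w.1) +
          v ⬝ᵥ ((fun i => dLv n L i x.1) - x.2) + q ⬝ᵥ ((fun i => dLq n L i x.1) - w.2) = 0 :=
        ⟨fun h p v q => by
          simpa [omegaU14_apply_of_vertical (u := ((0, q, v), p)) hL rfl hw] using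
            h ((0, q, v), p) rfl,
          fun h u hu => by rw [omegaU14_apply_of_vertical hL hu hw]; exact h _ _ _⟩
    _ ↔ _ := forall_dotProduct_add_eq_zero_iff _ _ _
    _ ↔ _ := by rw [sub_eq_zero, sub_eq_zero, @eq_comm _ _ x.2, @eq_comm _ _ w.2]

theorem extd1_thetaL_vertical_eq_zero_iff {L : E8 n → ℝ} {x w : E8 n}
    (hL : DifferentiableAt ℝ L x) (hdLv : ∀ i, DifferentiableAt ℝ (dLv n L i) x)
    (hw : w.1 = 1) (hκ : (fun i => kap n i x w) = 0) :
    (∀ u : E8 n, u.1 = 0 → extd1 (ThetaL n L) x u w = 0) ↔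
      (fun i => fderiv ℝ (dLv n L i) x w) = fun i => dLq n L i x := by
  calc (∀ u : E8 n, u.1 = 0 → extd1 (ThetaL n L) x u w = 0)
      ↔ ∀ q : Fin n → ℝ, ((fun i => dLq n L i x) - fun i => fderiv ℝ (dLv n L i) x w) ⬝ᵥ q = 0 :=
        ⟨fun h q => by
          simpa [extd1_thetaL_apply_of_vertical (u := (0, q, 0)) hL hdLv rfl hw, hκ,
            dotProduct_comm] using h (0, q, 0) rfl,
          fun h u hu => by
            rw [extd1_thetaL_apply_of_vertical hL hdLv hu hw, hκ, dotProduct_zero, zero_add,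
              dotProduct_comm]
            exact h _⟩
    _ ↔ _ := dotProduct_eq_zero_iff
    _ ↔ _ := by rw [sub_eq_zero, eq_comm]

theorem inKapSpan_kap (i : Fin n) : InKapSpan n (kap n i) :=
  ⟨fun j (_ : E8 n) => (Pi.single i 1 : Fin n → ℝ) j, fun _ => contDiff_const,
    fun x w => by simp [Pi.single_apply]⟩

theorem forall_inKapSpan_eq_zero_iff (x w : E8 n) :
    (∀ α, InKapSpan n α → α x w = 0) ↔ (fun i => kap n i x w) = 0 :=
  ⟨fun h => funext fun i => h _ (inKapSpan_kap i), fun h α ⟨f, _, hα⟩ => by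
    simp [hα, funext_iff.1 h]⟩

theorem isSolU14_iff {L : E8 n → ℝ} (hL : Differentiable ℝ L) {γ' : ℝ → E14 n} {I : Set ℝ} :
    IsSolU14 n L γ' I ↔ IsSection (fun x => x.1.1) γ' I ∧ ∀ t ∈ I,
      (fun i => kap n i (γ' t).1 (deriv γ' t).1) = 0 ∧
        (γ' t).2 = (fun i => dLv n L i (γ' t).1) ∧
          (deriv γ' t).2 = fun i => dLq n L i (γ' t).1 := by
  refine and_congr_right fun hs => ?_
  have hw (t : ℝ) (ht : t ∈ I) : (deriv γ' t).1.1 = 1 := IsSection.map_deriv_eq_one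
    (φ := (ContinuousLinearMap.fst ℝ ℝ ((Fin n → ℝ) × (Fin n → ℝ))).comp
      (ContinuousLinearMap.fst ℝ (E8 n) (Fin n → ℝ))) hs ht
  exact ⟨fun h t ht => (omegaU14_vertical_eq_zero_iff (hL _) (hw t ht)).1 fun u hu =>
      h (fun _ => u) contDiff_const (fun _ => hu) t ht,
    fun h ξ _ hξ t ht => (omegaU14_vertical_eq_zero_iff (hL _) (hw t ht)).2 (h t ht) _ (hξ _)⟩

theorem isSolE14_iff {L : E8 n → ℝ} (hL : ContDiff ℝ 2 L) {γ : ℝ → E8 n} {I : Set ℝ} :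
    IsSolE14 n L γ I ↔ IsSection Prod.fst γ I ∧ ∀ t ∈ I,
      (fun i => kap n i (γ t) (deriv γ t)) = 0 ∧
        (fun i => fderiv ℝ (dLv n L i) (γ t) (deriv γ t)) = fun i => dLq n L i (γ t) := by
  have hL' : Differentiable ℝ L := hL.differentiable two_ne_zero
  have hdLv (i : Fin n) : Differentiable ℝ (dLv n L i) :=
    (contDiff_dLv (m := 1) (by norm_num) hL i).differentiable one_ne_zero
  refine and_congr_right fun hs => ?_
  have hw (t : ℝ) (ht : t ∈ I) : (deriv γ t).1 = 1 := IsSection.map_deriv_eq_one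
    (φ := ContinuousLinearMap.fst ℝ ℝ ((Fin n → ℝ) × (Fin n → ℝ))) hs ht
  refine ⟨fun ⟨hκ, hdyn⟩ t ht => ?_, fun h => ⟨?_, ?_⟩⟩
  · have hκt := (forall_inKapSpan_eq_zero_iff _ _).1 fun α hα => hκ α hα t ht
    exact ⟨hκt, (extd1_thetaL_vertical_eq_zero_iff (hL' _) (fun i => hdLv i _) (hw t ht) hκt).1
      fun u hu => hdyn (fun _ => u) ⟨contDiff_const, fun _ => hu⟩ t ht⟩
  · exact fun α hα t ht => (forall_inKapSpan_eq_zero_iff _ _).2 (h t ht).1 α hα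
  · exact fun ξ hξ t ht => (extd1_thetaL_vertical_eq_zero_iff (hL' _) (fun i => hdLv i _) (hw t ht)
      (h t ht).1).2 (h t ht).2 _ (hξ.2 _)

def legendreGraph (n : ℕ) (L : E8 n → ℝ) (x : E8 n) : E14 n := (x, fun i => dLv n L i x)

theorem contDiff_legendreGraph {m k : WithTop ℕ∞} (hmk : m + 1 ≤ k) {L : E8 n → ℝ}
    (hL : ContDiff ℝ k L) : ContDiff ℝ m (legendreGraph n L) :=
  contDiff_id.prodMk (contDiff_pi.2 fun i => contDiff_dLv hmk hL i)

theorem hasDerivAt_legendreGraph {L : E8 n → ℝ} {γ : ℝ → E8 n} {w : E8 n} {t : ℝ}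
    (hγ : HasDerivAt γ w t) (hdLv : ∀ i, DifferentiableAt ℝ (dLv n L i) (γ t)) :
    HasDerivAt (fun s => legendreGraph n L (γ s)) (w, fun i => fderiv ℝ (dLv n L i) (γ t) w) t :=
  hγ.prodMk (hasDerivAt_pi.2 fun i => (hdLv i).hasFDerivAt.comp_hasDerivAt t hγ)

end

/-- The GVP `(Ω_U, ∅, Γ(V(π∘π')))` (the Skinner–Rusk/unified formalism) is
dynamically `π'`-equivalent to the GVP `(dΘ_L, (∅, I₁ᵛᵃᵏ), Γ(V(π)))`: composition with `π'`
maps its solutions injectively onto the solutions of the latter. -/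
theorem unified_formalism_equivalence (n : ℕ) (L : E8 n → ℝ) (hL : ContDiff ℝ ∞ L) :
    (∀ (γ' : ℝ → E14 n) (I : Set ℝ), IsSolU14 n L γ' I →
        IsSolE14 n L (fun t => (γ' t).1) I) ∧
    (∀ (γ : ℝ → E8 n) (I : Set ℝ), IsSolE14 n L γ I →
        ∃ γ' : ℝ → E14 n, IsSolU14 n L γ' I ∧ ∀ t ∈ I, (γ' t).1 = γ t) ∧
    (∀ (γ₁ γ₂ : ℝ → E14 n) (I : Set ℝ), IsSolU14 n L γ₁ I → IsSolU14 n L γ₂ I →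
        (∀ t ∈ I, (γ₁ t).1 = (γ₂ t).1) → ∀ t ∈ I, γ₁ t = γ₂ t) := by
  have hL₁ : Differentiable ℝ L := hL.differentiable (by simp)
  have hL₂ : ContDiff ℝ 2 L := hL.of_le (WithTop.coe_le_coe.2 le_top)
  have hdLv (i : Fin n) : Differentiable ℝ (dLv n L i) :=
    (contDiff_dLv (m := 1) (by norm_num) hL₂ i).differentiable one_ne_zero
  refine ⟨fun γ' I hsol => ?_, fun γ I hsol => ?_, fun γ₁ γ₂ I h₁ h₂ hproj t ht => ?_⟩
  · obtain ⟨hs, h⟩ := (isSolU14_iff hL₁).1 hsol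
    have hs₀ : IsSection Prod.fst (fun t => (γ' t).1) I := hs.map contDiff_fst fun _ => rfl
    refine (isSolE14_iff hL₂).2 ⟨hs₀, fun t ht => ?_⟩
    have hgraph : γ' =ᶠ[nhds t] fun s => legendreGraph n L (γ' s).1 :=
      Filter.eventually_of_mem (hs.isOpen.mem_nhds ht) fun s hsI => Prod.ext rfl (h s hsI).2.1
    obtain ⟨hκ, -, hp⟩ := h t ht
    rw [((hasDerivAt_legendreGraph (hs₀.hasDerivAt ht) fun i => hdLv i _).congr_of_eventuallyEq
      hgraph).deriv] at hκ hp
    exact ⟨hκ, hp⟩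
  · obtain ⟨hs, h⟩ := (isSolE14_iff hL₂).1 hsol
    refine ⟨fun s => legendreGraph n L (γ s),
      (isSolU14_iff hL₁).2 ⟨hs.map (contDiff_legendreGraph (by simp) hL) fun _ => rfl,
        fun t ht => ?_⟩, fun _ _ => rfl⟩
    rw [(hasDerivAt_legendreGraph (hs.hasDerivAt ht) fun i => hdLv i _).deriv]
    exact ⟨(h t ht).1, rfl, (h t ht).2⟩
  · refine Prod.ext (hproj t ht) ?_
    rw [(((isSolU14_iff hL₁).1 h₁).2 t ht).2.1, (((isSolU14_iff hL₁).1 h₂).2 t ht).2.1, hproj t ht]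

end VPGeom
end
end
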